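/- arXiv:math/0401406 — 10 statements merged into one kernel-verified Lean document; each statement's English description precedes it below -/
import Mathlib

section
/- The sum of the series ∑_{n=1}^∞ (1/2^n) ∑_{k=0}^n (-1)^{k+1} · binom(n,k) · ln(k+1) equals ln(π/2). -/
/-!
By Frullani's integral, `log (k + 1) = ∫₀^∞ (e^{-t} - e^{-(k+1)t}) dt / t`, so with `x = e^{-t}`
every finite combination of the logarithms is `∫₀^∞ x (1 - x) / t · P(x) dt` for a polynomial `P`.
The `n`-th inner sum gives `P = (1 - x)^(n-1)`, and the weights `2^{-n}` sum these to the
geometric series `1 / (1 + x)`. The alternating series `∑ (-1)^j log ((j + 2) / (j + 1))` leads to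
`P = ∑ (-x)^j`, with the same limit `1 / (1 + x)`; its even partial sums are logarithms of the
Wallis products, whence the common value `log (π / 2)`. Dominated convergence justifies both limits.
-/

open Filter Real Set MeasureTheory Finset Topology

theorem one_sub_pow_eq_sum_neg_one_pow_choose {R : Type*} [CommRing R] (x : R) (n : ℕ) :
    (1 - x) ^ n = ∑ k ∈ range (n + 1), (-1) ^ k * n.choose k * x ^ k := by
  rw [sub_eq_neg_add, add_pow]
  refine sum_congr rfl fun k _ => ?_
  rw [neg_pow, one_pow, mul_one]
  ring

theorem sum_neg_one_pow_choose_mul_geom_sum {R : Type*} [CommRing R] [IsDomain R] {x : R}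
    (hx : x ≠ 1) (n : ℕ) :
    ∑ k ∈ range (n + 2), (-1) ^ (k + 1) * (n + 1).choose k * ∑ i ∈ range k, x ^ i
      = (1 - x) ^ n := by
  refine mul_left_cancel₀ (sub_ne_zero.2 hx.symm) ?_
  calc (1 - x) * ∑ k ∈ range (n + 2), (-1) ^ (k + 1) * (n + 1).choose k * ∑ i ∈ range k, x ^ i
      = (1 - x) ^ (n + 1) - (1 - 1) ^ (n + 1) := by
        rw [one_sub_pow_eq_sum_neg_one_pow_choose, one_sub_pow_eq_sum_neg_one_pow_choose,
          mul_sum, ← sum_sub_distrib]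
        refine sum_congr rfl fun k _ => ?_
        linear_combination ((-1) ^ (k + 1) * (n + 1).choose k : R) * mul_neg_geom_sum x k
    _ = (1 - x) * (1 - x) ^ n := by rw [sub_self, zero_pow n.succ_ne_zero, pow_succ']; ring

theorem tendsto_integral_mul_of_bounded {α 𝕜 : Type*} [MeasurableSpace α] [RCLike 𝕜]
    {μ : Measure α} {g v : α → 𝕜} {u : ℕ → α → 𝕜} (C : ℝ) (hg : Integrable g μ)
    (hu : ∀ N, AEStronglyMeasurable (u N) μ) (hbd : ∀ N, ∀ᵐ a ∂μ, ‖u N a‖ ≤ C)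
    (hlim : ∀ᵐ a ∂μ, Tendsto (fun N => u N a) atTop (𝓝 (v a))) :
    Tendsto (fun N => ∫ a, g a * u N a ∂μ) atTop (𝓝 (∫ a, g a * v a ∂μ)) := by
  refine tendsto_integral_of_dominated_convergence (fun a => ‖g a‖ * C)
    (fun N => hg.aestronglyMeasurable.mul (hu N)) (hg.norm.mul_const C) (fun N => ?_) ?_
  · filter_upwards [hbd N] with a ha
    rw [norm_mul]
    exact mul_le_mul_of_nonneg_left ha (norm_nonneg _)
  · filter_upwards [hlim] with a ha
    exact ha.const_mul (g a)

noncomputable def frullaniKernel (t : ℝ) : ℝ := exp (-t) * (1 - exp (-t)) / t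

theorem exp_neg_mem_Ioo {t : ℝ} (ht : 0 < t) : exp (-t) ∈ Set.Ioo 0 1 :=
  ⟨exp_pos _, exp_lt_one_iff.2 (neg_neg_iff_pos.2 ht)⟩

theorem integrableOn_frullaniKernel : IntegrableOn frullaniKernel (Ioi 0) := by
  have hexp : IntegrableOn (fun t : ℝ => exp (-t)) (Ioi 0) := by
    simpa using exp_neg_integrableOn_Ioi 0 one_pos
  refine hexp.mono' ?_ (ae_restrict_of_forall_mem measurableSet_Ioi fun t ht => ?_)
  · refine ContinuousOn.aestronglyMeasurable ?_ measurableSet_Ioi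
    exact ContinuousOn.div (by fun_prop) continuousOn_id fun t ht => ne_of_gt ht
  · have ht : 0 < t := ht
    have hx := exp_neg_mem_Ioo ht
    have hsub : 1 - exp (-t) ≤ t := by linarith [add_one_le_exp (-t)]
    rw [frullaniKernel, norm_of_nonneg (div_nonneg (mul_nonneg hx.1.le (by linarith [hx.2])) ht.le),
      div_le_iff₀ ht]
    exact mul_le_mul_of_nonneg_left hsub hx.1.le

theorem integrableOn_frullaniKernel_mul {P : ℝ → ℝ} (hP : Continuous P) :
    IntegrableOn (fun t => frullaniKernel t * P (exp (-t))) (Ioi 0) := by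
  obtain ⟨C, hC⟩ := isCompact_Icc.exists_bound_of_continuousOn (hP.continuousOn (s := Icc 0 1))
  refine integrableOn_frullaniKernel.mul_bdd (by fun_prop) (c := C)
    (ae_restrict_of_forall_mem measurableSet_Ioi fun t ht => hC _ ?_)
  exact Set.Ioo_subset_Icc_self (exp_neg_mem_Ioo ht)

theorem log_nat_add_one_eq_integral_frullaniKernel (k : ℕ) :
    log (k + 1) = ∫ t in Ioi 0, frullaniKernel t * ∑ i ∈ range k, exp (-t) ^ i := by
  have hpt : ∀ t ∈ Ioi (0 : ℝ), frullaniKernel t * ∑ i ∈ range k, exp (-t) ^ i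
      = t⁻¹ • (exp (-(1 * t)) - exp (-((k + 1) * t))) := by
    intro t _
    have hpow : exp (-((k + 1) * t)) = exp (-t) ^ (k + 1) := by
      rw [← exp_nat_mul]; congr 1; push_cast; ring
    rw [smul_eq_mul, one_mul, hpow, frullaniKernel]
    linear_combination (exp (-t) / t) * mul_neg_geom_sum (exp (-t)) k
  have hint := (integrableOn_frullaniKernel_mul (P := fun x => ∑ i ∈ range k, x ^ i)
    (by fun_prop)).congr_fun hpt measurableSet_Ioi
  have hfrullani := Frullani.integral_Ioi_eq (f := fun x => exp (-x)) (L := 1) (R := 0)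
    ((continuous_exp.comp continuous_neg).locallyIntegrable.locallyIntegrableOn _) one_pos
    (by positivity : (0 : ℝ) < k + 1)
    (((continuous_exp.comp continuous_neg).tendsto' 0 1 (by simp)).mono_left nhdsWithin_le_nhds)
    tendsto_exp_neg_atTop_nhds_zero hint
  rw [setIntegral_congr_fun measurableSet_Ioi hpt, hfrullani]
  simp

theorem sum_mul_integral_frullaniKernel_mul {ι : Type*} (s : Finset ι) (c : ι → ℝ)
    {P : ι → ℝ → ℝ} (hP : ∀ i, Continuous (P i)) :
    ∑ i ∈ s, c i * ∫ t in Ioi 0, frullaniKernel t * P i (exp (-t))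
      = ∫ t in Ioi 0, frullaniKernel t * ∑ i ∈ s, c i * P i (exp (-t)) := by
  simp_rw [mul_sum, mul_left_comm (frullaniKernel _) (c _)]
  rw [integral_finsetSum _ fun i _ => (integrableOn_frullaniKernel_mul (hP i)).const_mul (c i)]
  simp_rw [integral_const_mul]

theorem tendsto_integral_frullaniKernel_mul {P : ℕ → ℝ → ℝ} (C : ℝ) (hP : ∀ N, Continuous (P N))
    (hbd : ∀ N, ∀ x ∈ Set.Ioo (0 : ℝ) 1, |P N x| ≤ C)
    (hlim : ∀ x ∈ Set.Ioo (0 : ℝ) 1, Tendsto (fun N => P N x) atTop (𝓝 (1 + x)⁻¹)) :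
    Tendsto (fun N => ∫ t in Ioi 0, frullaniKernel t * P N (exp (-t))) atTop
      (𝓝 (∫ t in Ioi 0, frullaniKernel t * (1 + exp (-t))⁻¹)) :=
  tendsto_integral_mul_of_bounded C integrableOn_frullaniKernel (fun N => by fun_prop)
    (fun N => ae_restrict_of_forall_mem measurableSet_Ioi fun t ht =>
      hbd N _ (exp_neg_mem_Ioo ht))
    (ae_restrict_of_forall_mem measurableSet_Ioi fun t ht => hlim _ (exp_neg_mem_Ioo ht))

theorem sum_neg_one_pow_choose_mul_log_eq_integral (n : ℕ) :
    ∑ k ∈ range (n + 2), (-1 : ℝ) ^ (k + 1) * (n + 1).choose k * log (k + 1)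
      = ∫ t in Ioi 0, frullaniKernel t * (1 - exp (-t)) ^ n := by
  simp_rw [log_nat_add_one_eq_integral_frullaniKernel]
  rw [sum_mul_integral_frullaniKernel_mul _ _ (P := fun k x => ∑ i ∈ range k, x ^ i)
    fun k => by fun_prop]
  refine setIntegral_congr_fun measurableSet_Ioi fun t ht => ?_
  rw [sum_neg_one_pow_choose_mul_geom_sum (exp_neg_mem_Ioo ht).2.ne]

theorem tendsto_sum_half_pow_mul_sum_choose_log :
    Tendsto (fun N : ℕ => ∑ n ∈ Icc 1 N,
        (1 / 2 ^ n : ℝ) * ∑ k ∈ range (n + 1), (-1 : ℝ) ^ (k + 1) * n.choose k * log (k + 1))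
      atTop (𝓝 (∫ t in Ioi 0, frullaniKernel t * (1 + exp (-t))⁻¹)) := by
  have hsum : ∀ N : ℕ, ∑ n ∈ Icc 1 N,
      (1 / 2 ^ n : ℝ) * ∑ k ∈ range (n + 1), (-1 : ℝ) ^ (k + 1) * n.choose k * log (k + 1)
        = ∫ t in Ioi 0,
            frullaniKernel t * ∑ m ∈ range N, 1 / 2 ^ (m + 1) * (1 - exp (-t)) ^ m := by
    intro N
    rw [← Finset.Ico_add_one_right_eq_Icc, sum_Ico_eq_sum_range, Nat.add_sub_cancel]
    simp_rw [add_comm 1, sum_neg_one_pow_choose_mul_log_eq_integral]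
    exact sum_mul_integral_frullaniKernel_mul _ _ (P := fun m x => (1 - x) ^ m)
      fun m => by fun_prop
  simp_rw [hsum]
  refine tendsto_integral_frullaniKernel_mul 2
    (P := fun N x => ∑ m ∈ range N, 1 / 2 ^ (m + 1) * (1 - x) ^ m) (fun N => by fun_prop)
    (fun N x hx => ?_) fun x hx => ?_
  · have hterm : ∀ m ∈ range N, |1 / 2 ^ (m + 1) * (1 - x) ^ m| ≤ (1 / 2 : ℝ) ^ m := by
      intro m _
      rw [abs_of_nonneg (by have := hx.2; positivity)]
      calc 1 / 2 ^ (m + 1) * (1 - x) ^ m ≤ 1 / 2 ^ (m + 1) * 1 ^ m := by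
            gcongr <;> linarith [hx.1, hx.2]
        _ ≤ (1 / 2) ^ m := by rw [one_pow, mul_one, one_div_pow]; gcongr <;> norm_num
    exact (abs_sum_le_sum_abs _ _).trans ((sum_le_sum hterm).trans (sum_geometric_two_le N))
  · have hgeom := (hasSum_geometric_of_lt_one (r := (1 - x) / 2) (by linarith [hx.2])
      (by linarith [hx.1])).mul_left (1 / 2)
    convert hgeom.tendsto_sum_nat using 2 with N
    · refine sum_congr rfl fun m _ => ?_
      rw [div_pow, pow_succ]; ring
    · field_simp; ring

theorem log_add_two_sub_log_add_one_eq_integral (j : ℕ) :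
    log (j + 2) - log (j + 1) = ∫ t in Ioi 0, frullaniKernel t * exp (-t) ^ j := by
  rw [show (j : ℝ) + 2 = ((j + 1 : ℕ) : ℝ) + 1 by push_cast; ring,
    log_nat_add_one_eq_integral_frullaniKernel, log_nat_add_one_eq_integral_frullaniKernel,
    ← integral_sub
      (integrableOn_frullaniKernel_mul (P := fun x => ∑ i ∈ range (j + 1), x ^ i) (by fun_prop))
      (integrableOn_frullaniKernel_mul (P := fun x => ∑ i ∈ range j, x ^ i) (by fun_prop))]
  simp_rw [sum_range_succ, mul_add, add_sub_cancel_left]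

theorem tendsto_sum_neg_one_pow_mul_log_sub_log :
    Tendsto (fun M : ℕ => ∑ j ∈ range M, (-1 : ℝ) ^ j * (log (j + 2) - log (j + 1)))
      atTop (𝓝 (∫ t in Ioi 0, frullaniKernel t * (1 + exp (-t))⁻¹)) := by
  simp_rw [log_add_two_sub_log_add_one_eq_integral,
    sum_mul_integral_frullaniKernel_mul _ _ (P := fun j x => x ^ j) fun j => by fun_prop,
    ← neg_pow]
  refine tendsto_integral_frullaniKernel_mul 2 (P := fun M x => ∑ j ∈ range M, (-x) ^ j)
    (fun M => by fun_prop) (fun M x hx => ?_) fun x hx => ?_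
  · rw [geom_sum_eq (by linarith [hx.1]), abs_div, div_le_iff₀ (by rw [abs_pos]; linarith [hx.1]),
      abs_of_neg (by linarith [hx.1] : -x - 1 < 0)]
    have hpow : |(-x) ^ M| ≤ 1 := by
      rw [abs_pow, abs_neg, abs_of_pos hx.1]; exact pow_le_one₀ hx.1.le hx.2.le
    rw [abs_le]
    constructor <;> linarith [abs_le.1 hpow, hx.1]
  · have hgeom := (hasSum_geometric_of_abs_lt_one (r := -x)
      (by rw [abs_neg, abs_of_pos hx.1]; exact hx.2)).tendsto_sum_nat
    rwa [sub_neg_eq_add] at hgeom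

theorem sum_range_two_mul_neg_one_pow_mul_log_sub_log (m : ℕ) :
    ∑ j ∈ range (2 * m), (-1 : ℝ) ^ j * (log (j + 2) - log (j + 1))
      = log (∏ i ∈ range m, ((2 : ℝ) * i + 2) / (2 * i + 1) * ((2 * i + 2) / (2 * i + 3))) := by
  rw [log_prod fun i _ => by positivity]
  induction m with
  | zero => simp
  | succ m ih =>
    rw [mul_add_one, sum_range_succ, sum_range_succ, ih, sum_range_succ,
      log_mul (by positivity) (by positivity), log_div (by positivity) (by positivity),
      log_div (by positivity) (by positivity)]
    push_cast
    rw [pow_succ, pow_mul, neg_one_sq, one_pow]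
    ring_nf

theorem integral_frullaniKernel_mul_inv_one_add_exp_neg :
    ∫ t in Ioi 0, frullaniKernel t * (1 + exp (-t))⁻¹ = log (π / 2) := by
  have hwallis := ((continuousAt_log (by positivity)).tendsto.comp tendsto_prod_pi_div_two)
  refine tendsto_nhds_unique ?_ hwallis
  have heven := tendsto_sum_neg_one_pow_mul_log_sub_log.comp
    (tendsto_id.const_mul_atTop' (by norm_num : 0 < 2))
  simpa [Function.comp_def, sum_range_two_mul_neg_one_pow_mul_log_sub_log] using heven

/-- ∑_{n=1}^∞ (1/2^n) ∑_{k=0}^n (-1)^{k+1} C(n,k) ln(k+1) = ln(π/2). -/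
theorem stmt_0 :
    Tendsto (fun N : ℕ => ∑ n ∈ Finset.Icc 1 N,
        (1 / 2 ^ n : ℝ) * ∑ k ∈ Finset.range (n + 1),
          (-1 : ℝ) ^ (k + 1) * (n.choose k : ℝ) * Real.log (k + 1))
      atTop (nhds (Real.log (Real.pi / 2))) := by
  rw [← integral_frullaniKernel_mul_inv_one_add_exp_neg]
  exact tendsto_sum_half_pow_mul_sum_choose_log
end

section
/- The infinite product ∏_{n=1}^∞ (∏_{k=0}^n (k+1)^{(-1)^{k+1} binom(n,k)})^{1/2^n}, where the outer exponent 1/2^n and the inner exponents are real powers of positive reals, converges and equals π/2. -/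
/-!
Taking logarithms, the `N`-th partial product is `exp (∑ n ≤ N, M c n)`, where
`M b n = 2⁻ⁿ ∑ₖ C(n,k) b k` is the binomial mean and `c k = (-1)^(k+1) log (k+1)`.
Pascal's rule `M b (n+1) = (M b n + M (b ∘ succ) n) / 2` telescopes this sum into `M B N`,
where `B i = s i + s (i-1)` for the partial sums `s` of `c` (Euler's series transformation).
The even terms `B (2m)` are logarithms of Wallis' partial products for `π / 2`, and
`B (2m+1) - B (2m) = log ((2m+2)/(2m+1)) → 0`, so `B → log (π / 2)`. Binomial means form a
regular (Silverman–Toeplitz) summation method, so `M B N` has the same limit.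
-/

open Filter Real Finset Topology

theorem Filter.Tendsto.toeplitz_smul {E : Type*} [NormedAddCommGroup E] [NormedSpace ℝ E]
    {w : ℕ → ℕ → ℝ} {b : ℕ → E} {L : E}
    (hb : Tendsto b atTop (𝓝 L)) (hw_nonneg : ∀ N i, 0 ≤ w N i)
    (hw_sum : ∀ N, ∑ i ∈ range (N + 1), w N i = 1)
    (hw_zero : ∀ i, Tendsto (fun N => w N i) atTop (𝓝 0)) :
    Tendsto (fun N => ∑ i ∈ range (N + 1), w N i • b i) atTop (𝓝 L) := by
  have hsub (N : ℕ) : ∑ i ∈ range (N + 1), w N i • b i - L =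
      ∑ i ∈ range (N + 1), w N i • (b i - L) := by
    simp only [smul_sub, sum_sub_distrib, ← sum_smul, hw_sum, one_smul]
  rw [← tendsto_sub_nhds_zero_iff, funext hsub, Metric.tendsto_atTop]
  intro ε hε
  obtain ⟨K, hK⟩ := Metric.tendsto_atTop.1 hb (ε / 2) (half_pos hε)
  have hhead : Tendsto (fun N => ∑ i ∈ range K, w N i • (b i - L)) atTop (𝓝 0) := by
    simpa using tendsto_finsetSum (range K) fun i _ => (hw_zero i).smul_const (b i - L)
  obtain ⟨N₀, hN₀⟩ := Metric.tendsto_atTop.1 hhead (ε / 2) (half_pos hε)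
  refine ⟨max N₀ K, fun N hN => ?_⟩
  have htail : ‖∑ i ∈ Ico K (N + 1), w N i • (b i - L)‖ ≤ ε / 2 := calc
    _ ≤ ∑ i ∈ Ico K (N + 1), w N i * (ε / 2) := norm_sum_le_of_le _ fun i hi => by
        rw [norm_smul, Real.norm_of_nonneg (hw_nonneg N i), ← dist_eq_norm]
        exact mul_le_mul_of_nonneg_left (hK i (mem_Ico.1 hi).1).le (hw_nonneg N i)
    _ ≤ ∑ i ∈ range (N + 1), w N i * (ε / 2) :=
        sum_le_sum_of_subset_of_nonneg (range_eq_Ico _ ▸ Ico_subset_Ico_left K.zero_le)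
          fun i _ _ => mul_nonneg (hw_nonneg N i) (half_pos hε).le
    _ = ε / 2 := by rw [← sum_mul, hw_sum, one_mul]
  rw [dist_zero_right, ← sum_range_add_sum_Ico _ (show K ≤ N + 1 by omega)]
  calc _ ≤ _ := norm_add_le _ _
    _ < ε / 2 + ε / 2 :=
        add_lt_add_of_lt_of_le (by simpa using hN₀ N (le_of_max_le_left hN)) htail
    _ = ε := add_halves ε

section BinomialMean

variable {E : Type*} [AddCommGroup E] [Module ℝ E]

noncomputable def binomialMean (b : ℕ → E) (N : ℕ) : E :=
  ((2 : ℝ) ^ N)⁻¹ • ∑ i ∈ range (N + 1), N.choose i • b i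

lemma binomialMean_zero (b : ℕ → E) : binomialMean b 0 = b 0 := by
  simp [binomialMean]

lemma binomialMean_add (b b' : ℕ → E) (N : ℕ) :
    binomialMean (b + b') N = binomialMean b N + binomialMean b' N := by
  simp only [binomialMean, Pi.add_apply, smul_add, sum_add_distrib]

lemma binomialMean_succ (b : ℕ → E) (N : ℕ) :
    binomialMean b (N + 1) =
      (2 : ℝ)⁻¹ • (binomialMean b N + binomialMean (fun i => b (i + 1)) N) := by
  simp only [binomialMean, sum_choose_succ_nsmul fun i _ => b i]
  module

lemma binomialMean_eq_sum_smul (b : ℕ → E) (N : ℕ) :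
    binomialMean b N = ∑ i ∈ range (N + 1), ((N.choose i : ℝ) / 2 ^ N) • b i := by
  simp only [binomialMean, smul_sum, div_eq_inv_mul, mul_smul, Nat.cast_smul_eq_nsmul]

end BinomialMean

lemma tendsto_choose_div_two_pow (i : ℕ) :
    Tendsto (fun N : ℕ => (N.choose i : ℝ) / 2 ^ N) atTop (𝓝 0) :=
  squeeze_zero (fun _ => by positivity)
    (fun N => div_le_div_of_nonneg_right (mod_cast N.choose_le_pow i) (by positivity))
    (tendsto_pow_const_div_const_pow_of_one_lt i one_lt_two)

lemma tendsto_binomialMean {E : Type*} [NormedAddCommGroup E] [NormedSpace ℝ E]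
    {b : ℕ → E} {L : E} (hb : Tendsto b atTop (𝓝 L)) :
    Tendsto (binomialMean b) atTop (𝓝 L) := by
  simp only [funext (binomialMean_eq_sum_smul b)]
  refine hb.toeplitz_smul (fun N i => by positivity) (fun N => ?_) tendsto_choose_div_two_pow
  rw [← sum_div, ← Nat.cast_sum, Nat.sum_range_choose, Nat.cast_pow, Nat.cast_ofNat,
    div_self (by positivity)]

section PairedPartialSum

variable {E : Type*} [AddCommGroup E]

def pairedPartialSum (c : ℕ → E) (i : ℕ) : E := ∑ k ∈ range (i + 1), c k + ∑ k ∈ range i, c k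

lemma pairedPartialSum_succ (c : ℕ → E) (i : ℕ) :
    pairedPartialSum c (i + 1) = pairedPartialSum c i + c i + c (i + 1) := by
  simp only [pairedPartialSum, sum_range_succ c (i + 1), sum_range_succ c i]
  abel

lemma sum_range_binomialMean [Module ℝ E] (c : ℕ → E) (N : ℕ) :
    ∑ n ∈ range (N + 1), binomialMean c n = binomialMean (pairedPartialSum c) N := by
  induction N with
  | zero => simp [binomialMean_zero, pairedPartialSum]
  | succ N ih =>
    have hshift : (fun i => pairedPartialSum c (i + 1)) =
        pairedPartialSum c + c + fun i => c (i + 1) := funext (pairedPartialSum_succ c)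
    rw [sum_range_succ, ih, binomialMean_succ (pairedPartialSum c), hshift, binomialMean_add,
      binomialMean_add, binomialMean_succ c]
    module

end PairedPartialSum

lemma tendsto_atTop_of_even_odd {α : Type*} {f : ℕ → α} {l : Filter α}
    (h_even : Tendsto (fun n => f (2 * n)) atTop l)
    (h_odd : Tendsto (fun n => f (2 * n + 1)) atTop l) : Tendsto f atTop l := by
  intro s hs
  obtain ⟨N₀, hN₀⟩ := eventually_atTop.1 (h_even.eventually_mem hs)
  obtain ⟨N₁, hN₁⟩ := eventually_atTop.1 (h_odd.eventually_mem hs)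
  refine mem_atTop_sets.2 ⟨2 * (N₀ + N₁), fun n hn => ?_⟩
  obtain ⟨k, rfl | rfl⟩ := Nat.even_or_odd' n
  · exact hN₀ k (by omega)
  · exact hN₁ k (by omega)

noncomputable def alternatingLog (k : ℕ) : ℝ := (-1) ^ (k + 1) * log (k + 1)

lemma alternatingLog_two_mul (m : ℕ) : alternatingLog (2 * m) = -log (2 * m + 1) := by
  rw [alternatingLog, Odd.neg_one_pow ⟨m, rfl⟩, neg_one_mul]
  push_cast
  rfl

lemma alternatingLog_two_mul_add_one (m : ℕ) :
    alternatingLog (2 * m + 1) = log (2 * m + 2) := by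
  rw [alternatingLog, Even.neg_one_pow ⟨m + 1, by ring⟩, one_mul]
  push_cast
  ring_nf

lemma pairedPartialSum_alternatingLog_two_mul (M : ℕ) :
    pairedPartialSum alternatingLog (2 * M) =
      log (∏ i ∈ range M, ((2 : ℝ) * i + 2) / (2 * i + 1) * ((2 * i + 2) / (2 * i + 3))) := by
  rw [log_prod fun i _ => by positivity]
  induction M with
  | zero => simp [pairedPartialSum, alternatingLog]
  | succ M ih =>
    have hlast : alternatingLog (2 * M + 1 + 1) = -log (2 * M + 3) := by
      rw [show 2 * M + 1 + 1 = 2 * (M + 1) by ring, alternatingLog_two_mul]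
      push_cast
      ring_nf
    rw [show 2 * (M + 1) = 2 * M + 1 + 1 by ring, pairedPartialSum_succ, pairedPartialSum_succ, ih,
      sum_range_succ, hlast, alternatingLog_two_mul, alternatingLog_two_mul_add_one,
      log_mul (by positivity) (by positivity), log_div (by positivity) (by positivity),
      log_div (by positivity) (by positivity)]
    ring

lemma tendsto_pairedPartialSum_alternatingLog :
    Tendsto (pairedPartialSum alternatingLog) atTop (𝓝 (log (π / 2))) := by
  have h_even : Tendsto (fun M => pairedPartialSum alternatingLog (2 * M)) atTop
      (𝓝 (log (π / 2))) := by
    simp only [pairedPartialSum_alternatingLog_two_mul]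
    exact ((continuousAt_log (by positivity)).tendsto).comp tendsto_prod_pi_div_two
  have h_log : Tendsto (fun M : ℕ => log ((2 * M + 1) / (2 * M + 2) : ℝ)) atTop (𝓝 0) := by
    have h := (tendsto_natCast_div_add_atTop (1 : ℝ)).comp
      (tendsto_atTop_mono (fun M => by omega : ∀ M, M ≤ 2 * M + 1) tendsto_id)
    simpa [Function.comp_def, add_assoc, one_add_one_eq_two] using
      (continuousAt_log one_ne_zero).tendsto.comp h
  refine tendsto_atTop_of_even_odd h_even ((sub_zero (log (π / 2)) ▸ h_even.sub h_log).congr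
    fun M => ?_)
  rw [pairedPartialSum_succ, alternatingLog_two_mul, alternatingLog_two_mul_add_one,
    log_div (by positivity) (by positivity)]
  ring

lemma rpow_prod_eq_exp_binomialMean (n : ℕ) :
    (∏ k ∈ range (n + 1), ((k + 1 : ℝ)) ^ ((-1 : ℝ) ^ (k + 1) * (n.choose k : ℝ))) ^
      ((1 : ℝ) / 2 ^ n) = exp (binomialMean alternatingLog n) := by
  have hprod : ∏ k ∈ range (n + 1), ((k + 1 : ℝ)) ^ ((-1 : ℝ) ^ (k + 1) * (n.choose k : ℝ)) =
      exp (∑ k ∈ range (n + 1), n.choose k • alternatingLog k) := by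
    rw [exp_sum]
    refine prod_congr rfl fun k _ => ?_
    rw [rpow_def_of_pos (by positivity), alternatingLog, nsmul_eq_mul]
    ring_nf
  rw [hprod, ← exp_mul, binomialMean, smul_eq_mul]
  ring_nf

/-- π/2 = ∏_{n=1}^∞ (∏_{k=0}^n (k+1)^{(-1)^{k+1} C(n,k)})^{1/2^n}, with real powers. -/
theorem stmt_1 :
    Tendsto (fun N : ℕ => ∏ n ∈ Finset.Icc 1 N,
        (∏ k ∈ Finset.range (n + 1),
          ((k + 1 : ℝ)) ^ ((-1 : ℝ) ^ (k + 1) * (n.choose k : ℝ))) ^ ((1 : ℝ) / 2 ^ n))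
      atTop (nhds (Real.pi / 2)) := by
  have hlim : Tendsto (fun N => exp (binomialMean (pairedPartialSum alternatingLog) N)) atTop
      (𝓝 (π / 2)) := by
    simpa [Function.comp_def, exp_log (by positivity : 0 < π / 2)] using
      (continuous_exp.tendsto _).comp (tendsto_binomialMean tendsto_pairedPartialSum_alternatingLog)
  refine hlim.congr fun N => ?_
  have h_zero : exp (binomialMean alternatingLog 0) = 1 := by
    simp [binomialMean_zero, alternatingLog]
  rw [← sum_range_binomialMean, exp_sum, prod_range_eq_mul_Ico _ (Nat.add_one_pos N),
    Ico_add_one_right_eq_Icc, h_zero, one_mul]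
  exact prod_congr rfl fun n _ => (rpow_prod_eq_exp_binomialMean n).symm
end

section
/- The sum of the series ∑_{n=1}^∞ (1/(n+1)) ∑_{k=0}^n (-1)^{k+1} · binom(n,k) · ln(k+1) equals γ, Euler's constant. -/
/-!
Both sides are integrals over `(0, 1)`. Writing `(1 - x ^ t) / -log x = ∫ s in (0, t), x ^ s` and
integrating in `x` first (Tonelli) gives `∫ (1 - x ^ t) / -log x = log (t + 1)`; expanding
`(1 - x) ^ n = ∑ₖ (-1) ^ (k + 1) C(n, k) (1 - x ^ k)` then identifies the inner sum with
`∫ (1 - x) ^ n / -log x`. The logarithmic series sums `∑_{n ≥ 1} (1 - x) ^ n / (n + 1)` to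
`-log x / (1 - x) - 1`, so the partial sums of the series are the integrals of functions
increasing to `1 / (1 - x) + 1 / log x`. That integral is `γ`: against the weight `1 - x ^ n` the
first term contributes the harmonic number `Hₙ` and the second `-log (n + 1)`, and monotone
convergence lets `n → ∞` on both counts.
-/

open Filter Real MeasureTheory Set Topology

lemma integrable_and_integral_eq_of_lintegral_ofReal_eq {α : Type*} [MeasurableSpace α]
    {μ : Measure α} {f : α → ℝ} {c : ℝ} (hm : AEStronglyMeasurable f μ) (hf : 0 ≤ᵐ[μ] f)
    (h : ∫⁻ x, ENNReal.ofReal (f x) ∂μ = ENNReal.ofReal c) (hc : 0 ≤ c) :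
    Integrable f μ ∧ ∫ x, f x ∂μ = c := by
  have hfin : HasFiniteIntegral f μ := by
    rw [hasFiniteIntegral_iff_ofReal hf, h]
    exact ENNReal.ofReal_lt_top
  refine ⟨⟨hm, hfin⟩, ?_⟩
  rw [integral_eq_lintegral_of_nonneg_ae hf hm, h, ENNReal.toReal_ofReal hc]

lemma integrable_and_integral_eq_of_monotone_of_tendsto {α : Type*} [MeasurableSpace α]
    {μ : Measure α} {f : ℕ → α → ℝ} {F : α → ℝ} {c : ℝ}
    (hf : ∀ n, Integrable (f n) μ) (hf_nonneg : ∀ n, 0 ≤ᵐ[μ] f n)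
    (h_mono : ∀ᵐ x ∂μ, Monotone fun n ↦ f n x)
    (h_tendsto : ∀ᵐ x ∂μ, Tendsto (fun n ↦ f n x) atTop (𝓝 (F x)))
    (h_integral : Tendsto (fun n ↦ ∫ x, f n x ∂μ) atTop (𝓝 c)) :
    Integrable F μ ∧ ∫ x, F x ∂μ = c := by
  have hc : 0 ≤ c := ge_of_tendsto' h_integral fun n ↦ integral_nonneg_of_ae (hf_nonneg n)
  have hF_nonneg : 0 ≤ᵐ[μ] F := by
    filter_upwards [h_tendsto, ae_all_iff.2 hf_nonneg] with x hx hx_nonneg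
    exact ge_of_tendsto' hx hx_nonneg
  refine integrable_and_integral_eq_of_lintegral_ofReal_eq
    (aestronglyMeasurable_of_tendsto_ae _ (fun n ↦ (hf n).1) h_tendsto) hF_nonneg ?_ hc
  have h_lintegral := lintegral_tendsto_of_tendsto_of_monotone
    (fun n ↦ (hf n).1.aemeasurable.ennreal_ofReal)
    (by filter_upwards [h_mono] with x hx using fun m n hmn ↦ ENNReal.ofReal_le_ofReal (hx hmn))
    (by filter_upwards [h_tendsto] with x hx using (ENNReal.continuous_ofReal.tendsto _).comp hx)
  refine tendsto_nhds_unique h_lintegral ?_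
  simp_rw [← ofReal_integral_eq_lintegral_ofReal (hf _) (hf_nonneg _)]
  exact (ENNReal.continuous_ofReal.tendsto _).comp h_integral

lemma lintegral_Ioo_zero_one_rpow {s : ℝ} (hs : -1 < s) :
    ∫⁻ x in Ioo (0 : ℝ) 1, ENNReal.ofReal (x ^ s) = ENNReal.ofReal (1 / (s + 1)) := by
  have hint : IntegrableOn (fun x : ℝ ↦ x ^ s) (Ioo 0 1) :=
    (intervalIntegral.integrableOn_Ioo_rpow_iff zero_lt_one).2 hs
  rw [← ofReal_integral_eq_lintegral_ofReal hint
    ((ae_restrict_mem measurableSet_Ioo).mono fun x hx ↦ rpow_nonneg hx.1.le s),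
    ← integral_Ioc_eq_integral_Ioo, ← intervalIntegral.integral_of_le zero_le_one,
    integral_rpow (Or.inl hs), one_rpow, zero_rpow (by linarith), sub_zero]

lemma integral_Ioo_const_rpow {x : ℝ} (hx : 0 < x) (hx_ne : x ≠ 1) {t : ℝ} (ht : 0 ≤ t) :
    ∫ s in Ioo 0 t, x ^ s = (1 - x ^ t) / -log x := by
  have hlog : log x ≠ 0 := log_ne_zero_of_pos_of_ne_one hx hx_ne
  simp_rw [rpow_def_of_pos hx]
  rw [← integral_Ioc_eq_integral_Ioo, ← intervalIntegral.integral_of_le ht,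
    intervalIntegral.integral_comp_mul_left exp hlog, integral_exp, mul_zero, exp_zero,
    smul_eq_mul]
  field_simp
  ring

lemma lintegral_one_sub_rpow_div_neg_log {t : ℝ} (ht : 0 ≤ t) :
    ∫⁻ x in Ioo (0 : ℝ) 1, ENNReal.ofReal ((1 - x ^ t) / -log x) =
      ENNReal.ofReal (log (t + 1)) := by
  have h_inner : ∀ᵐ x ∂volume.restrict (Ioo (0 : ℝ) 1),
      ENNReal.ofReal ((1 - x ^ t) / -log x) = ∫⁻ s in Ioo 0 t, ENNReal.ofReal (x ^ s) := by
    filter_upwards [ae_restrict_mem measurableSet_Ioo] with x hx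
    have hint : IntegrableOn (fun s : ℝ ↦ x ^ s) (Ioo 0 t) :=
      ((continuous_const_rpow hx.1.ne').integrableOn_Icc).mono_set Ioo_subset_Icc_self
    rw [← integral_Ioo_const_rpow hx.1 hx.2.ne ht, ofReal_integral_eq_lintegral_ofReal hint
      (Eventually.of_forall fun s ↦ rpow_nonneg hx.1.le s)]
  have h_outer : ∀ᵐ s ∂volume.restrict (Ioo 0 t),
      ∫⁻ x in Ioo (0 : ℝ) 1, ENNReal.ofReal (x ^ s) = ENNReal.ofReal (s + 1)⁻¹ := by
    filter_upwards [ae_restrict_mem measurableSet_Ioo] with s hs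
    rw [lintegral_Ioo_zero_one_rpow (by linarith [hs.1]), one_div]
  have hint : IntegrableOn (fun s : ℝ ↦ (s + 1)⁻¹) (Ioo 0 t) := by
    refine (ContinuousOn.integrableOn_Icc ?_).mono_set Ioo_subset_Icc_self
    exact (continuous_add_const 1).continuousOn.inv₀ fun s hs ↦ by linarith [hs.1]
  have hmeas : Measurable fun p : ℝ × ℝ ↦ ENNReal.ofReal (p.1 ^ p.2) := by measurability
  rw [lintegral_congr_ae h_inner, lintegral_lintegral_swap hmeas.aemeasurable,
    lintegral_congr_ae h_outer, ← ofReal_integral_eq_lintegral_ofReal hint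
      ((ae_restrict_mem measurableSet_Ioo).mono fun s hs ↦ by have := hs.1; positivity),
    ← integral_Ioc_eq_integral_Ioo, ← intervalIntegral.integral_of_le ht,
    intervalIntegral.integral_comp_add_right (·⁻¹), zero_add, integral_inv (by
      rw [mem_uIcc]; rintro (⟨h, -⟩ | ⟨h, -⟩) <;> linarith), div_one]

lemma integrableOn_and_integral_one_sub_rpow_div_neg_log {t : ℝ} (ht : 0 ≤ t) :
    IntegrableOn (fun x ↦ (1 - x ^ t) / -log x) (Ioo 0 1) ∧
      ∫ x in Ioo 0 1, (1 - x ^ t) / -log x = log (t + 1) := by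
  refine integrable_and_integral_eq_of_lintegral_ofReal_eq
    (by fun_prop : Measurable fun x : ℝ ↦ (1 - x ^ t) / -log x).aestronglyMeasurable
    ((ae_restrict_mem measurableSet_Ioo).mono fun x hx ↦ ?_)
    (lintegral_one_sub_rpow_div_neg_log ht) (log_nonneg (by linarith))
  have := log_neg hx.1 hx.2
  have := rpow_le_one hx.1.le hx.2.le ht
  exact div_nonneg (by linarith) (by linarith)

lemma one_sub_pow_eq_sum_choose_mul_one_sub_pow {R : Type*} [CommRing R] {n : ℕ} (hn : n ≠ 0)
    (x : R) :
    (1 - x) ^ n = ∑ k ∈ Finset.range (n + 1), (-1) ^ (k + 1) * n.choose k * (1 - x ^ k) := by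
  have h_binom (y : R) :
      (1 - y) ^ n = ∑ k ∈ Finset.range (n + 1), (-1) ^ k * n.choose k * y ^ k := by
    rw [sub_eq_add_neg, add_comm, add_pow]
    refine Finset.sum_congr rfl fun k _ ↦ ?_
    rw [neg_pow, one_pow, mul_one]
    ring
  have h_zero := h_binom 1
  rw [sub_self, zero_pow hn] at h_zero
  simp_rw [one_pow, mul_one] at h_zero
  rw [h_binom x, ← sub_zero (∑ k ∈ _, _), h_zero, ← Finset.sum_sub_distrib]
  refine Finset.sum_congr rfl fun k _ ↦ ?_
  ring

lemma integrableOn_and_integral_one_sub_pow_div_neg_log {n : ℕ} (hn : n ≠ 0) :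
    IntegrableOn (fun x ↦ (1 - x) ^ n / -log x) (Ioo 0 1) ∧
      ∫ x in Ioo 0 1, (1 - x) ^ n / -log x =
        ∑ k ∈ Finset.range (n + 1), (-1) ^ (k + 1) * n.choose k * log (k + 1) := by
  have h_expand : (fun x : ℝ ↦ (1 - x) ^ n / -log x) = fun x ↦
      ∑ k ∈ Finset.range (n + 1), (-1) ^ (k + 1) * n.choose k * ((1 - x ^ k) / -log x) := by
    ext x
    simp_rw [mul_div_assoc', ← Finset.sum_div, ← one_sub_pow_eq_sum_choose_mul_one_sub_pow hn]
  have h_log (k : ℕ) := integrableOn_and_integral_one_sub_rpow_div_neg_log k.cast_nonneg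
  simp only [rpow_natCast] at h_log
  rw [h_expand]
  refine ⟨integrable_finsetSum _ fun k _ ↦ (h_log k).1.const_mul _, ?_⟩
  rw [integral_finsetSum _ fun k _ ↦ (h_log k).1.const_mul _]
  simp_rw [integral_const_mul, (h_log _).2]

lemma inv_one_sub_add_inv_log_nonneg {x : ℝ} (hx : x ∈ Ioo (0 : ℝ) 1) :
    0 ≤ (1 - x)⁻¹ + (log x)⁻¹ := by
  have hlog : log x < 0 := log_neg hx.1 hx.2
  have h_le : 1 - x ≤ -log x := by linarith [log_le_sub_one_of_pos hx.1]
  have := inv_anti₀ (sub_pos.2 hx.2) h_le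
  rw [inv_neg] at this
  linarith

lemma one_sub_pow_mul_inv_one_sub_add_inv_log {x : ℝ} (hx : x ∈ Ioo (0 : ℝ) 1) (n : ℕ) :
    (1 - x ^ n) * ((1 - x)⁻¹ + (log x)⁻¹) =
      ∑ k ∈ Finset.range n, x ^ k - (1 - x ^ n) / -log x := by
  have hlog : log x ≠ 0 := (log_neg hx.1 hx.2).ne
  have h_one_sub : 1 - x ≠ 0 := (sub_pos.2 hx.2).ne'
  have h_sub_one : x - 1 ≠ 0 := (sub_neg.2 hx.2).ne
  rw [geom_sum_eq hx.2.ne]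
  field_simp
  ring

lemma integral_Ioo_geom_sum (n : ℕ) :
    ∫ x in Ioo (0 : ℝ) 1, ∑ k ∈ Finset.range n, x ^ k = harmonic n := by
  rw [← integral_Ioc_eq_integral_Ioo, ← intervalIntegral.integral_of_le zero_le_one,
    intervalIntegral.integral_finsetSum fun k _ ↦ intervalIntegral.intervalIntegrable_pow k,
    harmonic, Rat.cast_sum]
  refine Finset.sum_congr rfl fun k _ ↦ ?_
  simp [integral_pow]

lemma integrableOn_and_integral_one_sub_pow_mul_inv_one_sub_add_inv_log (n : ℕ) :
    IntegrableOn (fun x ↦ (1 - x ^ n) * ((1 - x)⁻¹ + (log x)⁻¹)) (Ioo 0 1) ∧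
      ∫ x in Ioo 0 1, (1 - x ^ n) * ((1 - x)⁻¹ + (log x)⁻¹) = eulerMascheroniSeq n := by
  have h_ae : (fun x : ℝ ↦ (1 - x ^ n) * ((1 - x)⁻¹ + (log x)⁻¹)) =ᵐ[volume.restrict (Ioo 0 1)]
      fun x ↦ ∑ k ∈ Finset.range n, x ^ k - (1 - x ^ n) / -log x := by
    filter_upwards [ae_restrict_mem measurableSet_Ioo] with x hx
    exact one_sub_pow_mul_inv_one_sub_add_inv_log hx n
  have h_geom : IntegrableOn (fun x : ℝ ↦ ∑ k ∈ Finset.range n, x ^ k) (Ioo 0 1) :=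
    (continuous_finsetSum _ fun k _ ↦ continuous_pow k).integrableOn_Icc.mono_set
      Ioo_subset_Icc_self
  have h_log := integrableOn_and_integral_one_sub_rpow_div_neg_log n.cast_nonneg
  simp only [rpow_natCast] at h_log
  refine ⟨(h_geom.sub h_log.1).congr h_ae.symm, ?_⟩
  rw [integral_congr_ae h_ae, integral_sub h_geom h_log.1, integral_Ioo_geom_sum, h_log.2,
    eulerMascheroniSeq]

lemma integrableOn_and_integral_inv_one_sub_add_inv_log :
    IntegrableOn (fun x ↦ (1 - x)⁻¹ + (log x)⁻¹) (Ioo 0 1) ∧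
      ∫ x in Ioo 0 1, ((1 - x)⁻¹ + (log x)⁻¹) = eulerMascheroniConstant := by
  have h_mem : ∀ᵐ x ∂volume.restrict (Ioo (0 : ℝ) 1), x ∈ Ioo 0 1 :=
    ae_restrict_mem measurableSet_Ioo
  refine integrable_and_integral_eq_of_monotone_of_tendsto
    (fun n ↦ (integrableOn_and_integral_one_sub_pow_mul_inv_one_sub_add_inv_log n).1)
    (fun n ↦ h_mem.mono fun x hx ↦ mul_nonneg (sub_nonneg.2 (pow_le_one₀ hx.1.le hx.2.le))
      (inv_one_sub_add_inv_log_nonneg hx))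
    (h_mem.mono fun x hx m n hmn ↦ mul_le_mul_of_nonneg_right
      (sub_le_sub_left (pow_le_pow_of_le_one hx.1.le hx.2.le hmn) 1)
      (inv_one_sub_add_inv_log_nonneg hx))
    (h_mem.mono fun x hx ↦ ?_) ?_
  · simpa using ((tendsto_pow_atTop_nhds_zero_of_lt_one hx.1.le hx.2).const_sub 1).mul_const
      ((1 - x)⁻¹ + (log x)⁻¹)
  · simp_rw [(integrableOn_and_integral_one_sub_pow_mul_inv_one_sub_add_inv_log _).2]
    exact tendsto_eulerMascheroniSeq

lemma hasSum_pow_succ_div_add_two {u : ℝ} (hu : |u| < 1) (hu0 : u ≠ 0) :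
    HasSum (fun n : ℕ ↦ u ^ (n + 1) / (n + 2)) (-log (1 - u) / u - 1) := by
  have h := ((hasSum_nat_add_iff' 1).2 (hasSum_pow_div_log_of_abs_lt_one hu)).div_const u
  have h_term (n : ℕ) : u ^ (n + 1 + 1) / ((n + 1 : ℕ) + 1) / u = u ^ (n + 1) / (n + 2) := by
    push_cast
    field_simp
    ring
  have h_sum : (-log (1 - u) - ∑ i ∈ Finset.range 1, u ^ (i + 1) / (i + 1)) / u =
      -log (1 - u) / u - 1 := by
    simp [sub_div, hu0]
  simpa only [h_term, h_sum] using h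

lemma tendsto_sum_Icc_one_sub_pow_div_neg_log {x : ℝ} (hx : x ∈ Ioo (0 : ℝ) 1) :
    Tendsto (fun N : ℕ ↦ ∑ n ∈ Finset.Icc 1 N, 1 / (n + 1 : ℝ) * ((1 - x) ^ n / -log x))
      atTop (𝓝 ((1 - x)⁻¹ + (log x)⁻¹)) := by
  have hlog : log x ≠ 0 := (log_neg hx.1 hx.2).ne
  have hx_sub : 1 - x ≠ 0 := (sub_pos.2 hx.2).ne'
  have h := (hasSum_pow_succ_div_add_two (u := 1 - x)
    (abs_lt.2 ⟨by linarith [hx.2], by linarith [hx.1]⟩) hx_sub).tendsto_sum_nat.div_const (-log x)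
  have h_partial (N : ℕ) : ∑ n ∈ Finset.Icc 1 N, 1 / (n + 1 : ℝ) * ((1 - x) ^ n / -log x) =
      (∑ n ∈ Finset.range N, (1 - x) ^ (n + 1) / (n + 2)) / -log x := by
    rw [← Finset.Ico_add_one_right_eq_Icc, Finset.sum_Ico_eq_sum_range, add_tsub_cancel_right,
      Finset.sum_div]
    refine Finset.sum_congr rfl fun n _ ↦ ?_
    push_cast
    ring
  have h_limit : (-log (1 - (1 - x)) / (1 - x) - 1) / -log x = (1 - x)⁻¹ + (log x)⁻¹ := by
    rw [sub_sub_cancel]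
    field_simp
    ring
  simpa only [h_partial, h_limit] using h

/-- ∑_{n=1}^∞ (1/(n+1)) ∑_{k=0}^n (-1)^{k+1} C(n,k) ln(k+1) = γ. -/
theorem stmt_2 :
    Tendsto (fun N : ℕ => ∑ n ∈ Finset.Icc 1 N,
        (1 / (n + 1) : ℝ) * ∑ k ∈ Finset.range (n + 1),
          (-1 : ℝ) ^ (k + 1) * (n.choose k : ℝ) * Real.log (k + 1))
      atTop (nhds Real.eulerMascheroniConstant) := by
  have h_mem : ∀ᵐ x ∂volume.restrict (Ioo (0 : ℝ) 1), x ∈ Ioo 0 1 :=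
    ae_restrict_mem measurableSet_Ioo
  have h_term {N n : ℕ} (hn : n ∈ Finset.Icc 1 N) :=
    integrableOn_and_integral_one_sub_pow_div_neg_log
      (Nat.one_le_iff_ne_zero.1 (Finset.mem_Icc.1 hn).1)
  have h_partial_int (N : ℕ) : IntegrableOn
      (fun x ↦ ∑ n ∈ Finset.Icc 1 N, 1 / (n + 1 : ℝ) * ((1 - x) ^ n / -log x)) (Ioo 0 1) :=
    integrable_finsetSum _ fun n hn ↦ (h_term hn).1.const_mul _
  have h := integral_tendsto_of_tendsto_of_monotone h_partial_int
    integrableOn_and_integral_inv_one_sub_add_inv_log.1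
    (h_mem.mono fun x hx N M hNM ↦ Finset.sum_le_sum_of_subset_of_nonneg
      (Finset.Icc_subset_Icc_right hNM) fun n _ _ ↦ mul_nonneg (by positivity)
        (div_nonneg (pow_nonneg (sub_nonneg.2 hx.2.le) n)
          (neg_nonneg.2 (log_nonpos hx.1.le hx.2.le))))
    (h_mem.mono fun x hx ↦ tendsto_sum_Icc_one_sub_pow_div_neg_log hx)
  rw [integrableOn_and_integral_inv_one_sub_add_inv_log.2] at h
  refine h.congr fun N ↦ ?_
  rw [integral_finsetSum _ fun n hn ↦ (h_term hn).1.const_mul _]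
  exact Finset.sum_congr rfl fun n hn ↦ by rw [integral_const_mul, (h_term hn).2]
end

section
/- The integral ∫_0^1 (1−x)/((1+x)·ln x) dx converges and equals −ln(π/2); equivalently, ln(π/2) = −∫_0^1 (1−x)/((1+x)·ln x) dx. -/
open MeasureTheory Real Filter Set


lemma key_integral (k : ℕ) :
    ∫ x in Set.Ioo (0:ℝ) 1, (x^(k+1) - x^k) / Real.log x
      = Real.log (k+2) - Real.log (k+1) := by
  set μ : Measure ℝ := volume.restrict (Ioo (0:ℝ) 1) with hμ
  set ν : Measure ℝ := volume.restrict (Ioc (k:ℝ) (k+1)) with hν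
  set F : ℝ → ℝ → ℝ := fun x t => Real.exp (t * Real.log x) with hF
  -- measurability of uncurried F
  have hmeas : Measurable (Function.uncurry F) := by
    apply Real.measurable_exp.comp
    exact measurable_snd.mul (Real.measurable_log.comp measurable_fst)
  -- integrability on the product
  have hprod : Integrable (Function.uncurry F) (μ.prod ν) := by
    refine (integrable_const 1).mono' hmeas.aestronglyMeasurable ?_
    rw [hμ, hν, Measure.prod_restrict]
    filter_upwards [ae_restrict_mem (measurableSet_Ioo.prod measurableSet_Ioc)] with p hp
    obtain ⟨⟨hx0, hx1⟩, ht0, ht1⟩ := hp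
    have hlog : Real.log p.1 < 0 := Real.log_neg hx0 hx1
    have htpos : (0:ℝ) ≤ p.2 := le_trans (Nat.cast_nonneg k) ht0.le
    have : p.2 * Real.log p.1 ≤ 0 := mul_nonpos_of_nonneg_of_nonpos htpos hlog.le
    simp only [Function.uncurry, hF, Real.norm_eq_abs, abs_of_pos (Real.exp_pos _)]
    exact Real.exp_le_one_iff.mpr this
  -- inner integral in t
  have hinner : ∀ x ∈ Ioo (0:ℝ) 1, ∫ t, F x t ∂ν = (x^(k+1) - x^k) / Real.log x := by
    intro x ⟨hx0, hx1⟩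
    have hlog : Real.log x < 0 := Real.log_neg hx0 hx1
    have hle : (k:ℝ) ≤ k+1 := by linarith
    rw [hν, ← intervalIntegral.integral_of_le hle]
    have : ∀ t : ℝ, F x t = Real.exp (Real.log x * t) := fun t => by rw [hF]; ring_nf
    simp_rw [this]
    rw [intervalIntegral.integral_comp_mul_left Real.exp hlog.ne, integral_exp]
    have e1 : Real.exp (Real.log x * ((k:ℝ)+1)) = x^(k+1) := by
      rw [mul_comm, ← Nat.cast_add_one, Real.exp_nat_mul, Real.exp_log hx0]
    have e2 : Real.exp (Real.log x * (k:ℝ)) = x^k := by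
      rw [mul_comm, Real.exp_nat_mul, Real.exp_log hx0]
    rw [e1, e2, smul_eq_mul]
    field_simp
  -- integral in x for fixed t
  have houter : ∀ t ∈ Ioc (k:ℝ) (k+1), ∫ x, F x t ∂μ = 1 / (t+1) := by
    intro t ⟨ht0, ht1⟩
    have htpos : (0:ℝ) ≤ t := le_trans (Nat.cast_nonneg k) ht0.le
    have : ∀ᵐ x ∂μ, F x t = x ^ t := by
      rw [hμ]
      filter_upwards [ae_restrict_mem measurableSet_Ioo] with x hx
      rw [hF, Real.rpow_def_of_pos hx.1, mul_comm]
    rw [integral_congr_ae this, hμ, ← MeasureTheory.integral_Ioc_eq_integral_Ioo,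
      ← intervalIntegral.integral_of_le zero_le_one, integral_rpow (Or.inl (by linarith))]
    rw [Real.one_rpow, Real.zero_rpow (by linarith)]
    ring
  -- put together with Fubini
  calc ∫ x in Set.Ioo (0:ℝ) 1, (x^(k+1) - x^k) / Real.log x
      = ∫ x, ∫ t, F x t ∂ν ∂μ := by
        rw [hμ]
        exact (setIntegral_congr_fun measurableSet_Ioo (fun x hx => (hinner x hx).symm))
    _ = ∫ t, ∫ x, F x t ∂μ ∂ν := integral_integral_swap hprod
    _ = ∫ t in Ioc (k:ℝ) (k+1), 1/(t+1) := by
        rw [hν]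
        exact setIntegral_congr_fun measurableSet_Ioc houter
    _ = Real.log (k+2) - Real.log (k+1) := by
        rw [← intervalIntegral.integral_of_le (by linarith : (k:ℝ) ≤ k+1)]
        rw [intervalIntegral.integral_comp_add_right (fun u => 1/u) 1,
          integral_one_div (by
            intro h
            rw [Set.uIcc_of_le (by linarith)] at h
            have := h.1; have : (0:ℝ) ≤ k := Nat.cast_nonneg k
            linarith [h.1])]
        rw [Real.log_div (by positivity) (by positivity)]
        push_cast; ring_nf


-- even/odd subsequence criterion
lemma tendsto_of_even_odd {f : ℕ → ℝ} {L : ℝ}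
    (he : Tendsto (fun m => f (2*m)) atTop (nhds L))
    (ho : Tendsto (fun m => f (2*m+1)) atTop (nhds L)) :
    Tendsto f atTop (nhds L) := by
  rw [Metric.tendsto_atTop] at he ho ⊢
  intro ε hε
  obtain ⟨N1, hN1⟩ := he ε hε
  obtain ⟨N2, hN2⟩ := ho ε hε
  refine ⟨2 * (max N1 N2) + 1, fun n hn => ?_⟩
  rcases Nat.even_or_odd n with ⟨m, hm⟩ | ⟨m, hm⟩
  · have : N1 ≤ m := by omega
    have := hN1 m this; rwa [show 2*m = n by omega] at this
  · have : N2 ≤ m := by omega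
    have := hN2 m this; rwa [show 2*m+1 = n by omega] at this

-- boundedness of the integrand family
lemma bound_aux {x : ℝ} (hx0 : 0 < x) (hx1 : x < 1) :
    |(1 - x) / ((1 + x) * Real.log x)| ≤ 1 := by
  have hlog : Real.log x < 0 := Real.log_neg hx0 hx1
  have h1x : (0:ℝ) < 1 + x := by linarith
  have hnum : 0 < 1 - x := by linarith
  have hle : 1 - x ≤ -Real.log x := by
    have := Real.log_le_sub_one_of_pos hx0; linarith
  rw [abs_div, abs_of_pos hnum, abs_mul, abs_of_pos h1x, abs_of_neg hlog]
  rw [div_le_one (by nlinarith)]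
  nlinarith

lemma meas_f : Measurable (fun x : ℝ => (1 - x) / ((1 + x) * Real.log x)) :=
  (measurable_const.sub measurable_id).div
    ((measurable_const.add measurable_id).mul Real.measurable_log)

lemma integrable_f : IntegrableOn (fun x : ℝ => (1 - x) / ((1 + x) * Real.log x)) (Set.Ioo 0 1) := by
  refine (integrable_const 1).mono' meas_f.aestronglyMeasurable ?_
  filter_upwards [ae_restrict_mem measurableSet_Ioo] with x hx
  exact bound_aux hx.1 hx.2


noncomputable def gk (k : ℕ) : ℝ → ℝ := fun x => (-1:ℝ)^(k+1) * ((x^(k+1) - x^k)/Real.log x)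

lemma sum_identity {x : ℝ} (hx0 : 0 < x) (hx1 : x < 1) (N : ℕ) :
    ∑ k ∈ Finset.range N, gk k x
      = (1-x)/((1+x)*Real.log x) - (-x)^N * ((1-x)/((1+x)*Real.log x)) := by
  have hlog : Real.log x ≠ 0 := (Real.log_neg hx0 hx1).ne
  have h1x : (1:ℝ) + x ≠ 0 := by positivity
  have hne : -x ≠ 1 := by linarith
  have hterm : ∀ k, gk k x = (1-x)/Real.log x * (-x)^k := by
    intro k
    rw [gk, neg_pow, neg_pow x]
    field_simp
    ring
  rw [Finset.sum_congr rfl (fun k _ => hterm k), ← Finset.mul_sum, geom_sum_eq hne]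
  have hd : -x - 1 ≠ 0 := by linarith [hx0]
  field_simp
  ring

lemma gk_bound {k : ℕ} {x : ℝ} (hx0 : 0 < x) (hx1 : x < 1) : ‖gk k x‖ ≤ 1 := by
  have hlog : Real.log x < 0 := Real.log_neg hx0 hx1
  have hle : 1 - x ≤ -Real.log x := by
    have := Real.log_le_sub_one_of_pos hx0; linarith
  have hxk : x^k ≤ 1 := pow_le_one₀ hx0.le hx1.le
  have hxk0 : 0 < x^k := pow_pos hx0 k
  rw [gk, Real.norm_eq_abs, abs_mul, abs_pow, abs_neg, abs_one, one_pow, one_mul,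
    abs_div, abs_of_neg hlog]
  have hnum : |x^(k+1) - x^k| = x^k * (1 - x) := by
    rw [abs_of_nonpos (by nlinarith [pow_succ x k] : x^(k+1) - x^k ≤ 0)]
    rw [pow_succ]; ring
  rw [hnum, div_le_one (by linarith)]
  nlinarith

lemma integrable_gk (k : ℕ) : IntegrableOn (gk k) (Set.Ioo 0 1) := by
  refine (integrable_const 1).mono' ?_ ?_
  · exact (((measurable_id.pow_const _).sub (measurable_id.pow_const _)).div
      Real.measurable_log).const_mul _ |>.aestronglyMeasurable
  · filter_upwards [ae_restrict_mem measurableSet_Ioo] with x hx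
    exact gk_bound hx.1 hx.2


noncomputable def remN (N : ℕ) : ℝ → ℝ := fun x => (-x)^N * ((1-x)/((1+x)*Real.log x))

lemma remN_bound {N : ℕ} {x : ℝ} (hx0 : 0 < x) (hx1 : x < 1) : ‖remN N x‖ ≤ 1 := by
  rw [remN, Real.norm_eq_abs, abs_mul, abs_pow, abs_neg]
  calc |x|^N * |(1-x)/((1+x)*Real.log x)| ≤ 1 * 1 := by
        apply mul_le_mul _ (bound_aux hx0 hx1) (abs_nonneg _) zero_le_one
        exact pow_le_one₀ (abs_nonneg x) (by rw [abs_of_pos hx0]; exact hx1.le)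
    _ = 1 := one_mul 1

lemma meas_remN (N : ℕ) : Measurable (remN N) :=
  ((measurable_id.neg.pow_const _)).mul meas_f

lemma integrable_remN (N : ℕ) : IntegrableOn (remN N) (Set.Ioo 0 1) := by
  refine (integrable_const 1).mono' (meas_remN N).aestronglyMeasurable ?_
  filter_upwards [ae_restrict_mem measurableSet_Ioo] with x hx
  exact remN_bound hx.1 hx.2

lemma remN_tendsto_zero :
    Tendsto (fun N => ∫ x in Set.Ioo (0:ℝ) 1, remN N x) atTop
      (nhds (∫ x in Set.Ioo (0:ℝ) 1, (0:ℝ))) := by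
  apply MeasureTheory.tendsto_integral_of_dominated_convergence (bound := fun _ => (1:ℝ))
  · exact fun N => (meas_remN N).aestronglyMeasurable
  · exact integrable_const 1
  · intro N
    filter_upwards [ae_restrict_mem measurableSet_Ioo] with x hx
    exact remN_bound hx.1 hx.2
  · filter_upwards [ae_restrict_mem measurableSet_Ioo] with x hx
    have h : Tendsto (fun N : ℕ => (-x)^N) atTop (nhds 0) := by
      apply tendsto_pow_atTop_nhds_zero_of_abs_lt_one
      rw [abs_neg, abs_of_pos hx.1]; exact hx.2
    have := h.mul_const ((1-x)/((1+x)*Real.log x))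
    rwa [zero_mul] at this


noncomputable def Ssum (N : ℕ) : ℝ :=
  ∑ k ∈ Finset.range N, (-1:ℝ)^(k+1) * (Real.log (k+2) - Real.log (k+1))

lemma S_even (m : ℕ) :
    Ssum (2*m) = -Real.log (∏ i ∈ Finset.range m,
      ((2:ℝ)*i+2)/(2*i+1) * ((2*i+2)/(2*i+3))) := by
  induction m with
  | zero => simp [Ssum]
  | succ m ih =>
    have hprodpos : (0:ℝ) < ∏ i ∈ Finset.range m, ((2:ℝ)*i+2)/(2*i+1) * ((2*i+2)/(2*i+3)) := by
      apply Finset.prod_pos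
      intro i _
      have : (0:ℝ) < (i:ℝ) + 1 := by positivity
      positivity
    have hW : (0:ℝ) < ((2:ℝ)*m+2)/(2*m+1) * ((2*m+2)/(2*m+3)) := by positivity
    rw [show 2*(m+1) = (2*m)+1+1 by ring, Ssum, Finset.sum_range_succ, Finset.sum_range_succ,
      ← Ssum, ih, Finset.prod_range_succ, Real.log_mul hprodpos.ne' hW.ne']
    have h1 : ((-1:ℝ))^(2*m+1) = -1 := Odd.neg_one_pow ⟨m, by ring⟩
    have h2 : ((-1:ℝ))^(2*m+1+1) = 1 := Even.neg_one_pow ⟨m+1, by ring⟩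
    rw [h1, h2]
    have e1 : (0:ℝ) < 2*(m:ℝ)+1 := by positivity
    have e2 : (0:ℝ) < 2*(m:ℝ)+2 := by positivity
    have e3 : (0:ℝ) < 2*(m:ℝ)+3 := by positivity
    rw [Real.log_mul (by positivity) (by positivity),
      Real.log_div e2.ne' e1.ne', Real.log_div e2.ne' e3.ne']
    push_cast
    have c1 : 2*(m:ℝ)+1+2 = 2*m+3 := by ring
    have c2 : 2*(m:ℝ)+1+1 = 2*m+2 := by ring
    rw [c1, c2]
    ring

lemma term_tendsto_zero :
    Tendsto (fun k : ℕ => (-1:ℝ)^(k+1) * (Real.log (k+2) - Real.log (k+1))) atTop (nhds 0) := by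
  apply squeeze_zero_norm (a := fun k : ℕ => 1/((k:ℝ)+1)) _ tendsto_one_div_add_atTop_nhds_zero_nat
  intro k
  have h1 : (0:ℝ) < (k:ℝ)+1 := by positivity
  have h2 : (0:ℝ) < (k:ℝ)+2 := by positivity
  have hmono : Real.log ((k:ℝ)+1) ≤ Real.log ((k:ℝ)+2) := Real.log_le_log h1 (by linarith)
  rw [Real.norm_eq_abs, abs_mul, abs_pow, abs_neg, abs_one, one_pow, one_mul,
    abs_of_nonneg (by linarith)]
  have : Real.log ((k:ℝ)+2) - Real.log ((k:ℝ)+1) = Real.log (((k:ℝ)+2)/((k:ℝ)+1)) :=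
    (Real.log_div h2.ne' h1.ne').symm
  rw [this]
  have := Real.log_le_sub_one_of_pos (show (0:ℝ) < ((k:ℝ)+2)/((k:ℝ)+1) by positivity)
  have heq : ((k:ℝ)+2)/((k:ℝ)+1) - 1 = 1/((k:ℝ)+1) := by field_simp; ring
  linarith [heq ▸ this]

lemma S_tendsto : Tendsto Ssum atTop (nhds (-Real.log (π/2))) := by
  have hWlim : Tendsto (fun m => -Real.log (∏ i ∈ Finset.range m,
      ((2:ℝ)*i+2)/(2*i+1) * ((2*i+2)/(2*i+3)))) atTop (nhds (-Real.log (π/2))) := by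
    exact (((Real.continuousAt_log (by positivity)).tendsto.comp
      Real.tendsto_prod_pi_div_two)).neg
  have heven : Tendsto (fun m => Ssum (2*m)) atTop (nhds (-Real.log (π/2))) := by
    simpa only [S_even] using hWlim
  apply tendsto_of_even_odd heven
  have h2m : Tendsto (fun m : ℕ => 2*m) atTop atTop := by
    apply tendsto_atTop_atTop_of_monotone (fun a b h => by omega)
    intro b; exact ⟨b, by omega⟩
  have hodd : ∀ m, Ssum (2*m+1) = Ssum (2*m) + (-1:ℝ)^(2*m+1) * (Real.log (2*m+2) - Real.log (2*m+1)) := by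
    intro m
    rw [Ssum, Finset.sum_range_succ, ← Ssum]
    push_cast
    ring_nf
  simp only [hodd]
  have := heven.add (term_tendsto_zero.comp h2m)
  simpa using this



/-- ∫_0^1 (1−x)/((1+x)·ln x) dx converges and equals −ln(π/2). -/
theorem stmt_3 :
    IntegrableOn (fun x : ℝ => (1 - x) / ((1 + x) * Real.log x)) (Set.Ioo 0 1) ∧
      ∫ x in Set.Ioo (0 : ℝ) 1, (1 - x) / ((1 + x) * Real.log x) =
        -Real.log (Real.pi / 2) := by
  refine ⟨integrable_f, ?_⟩
  set I := ∫ x in Set.Ioo (0:ℝ) 1, (1 - x) / ((1 + x) * Real.log x) with hI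
  have hgkint : ∀ k : ℕ, ∫ x in Set.Ioo (0:ℝ) 1, gk k x
      = (-1:ℝ)^(k+1) * (Real.log (k+2) - Real.log (k+1)) := by
    intro k
    simp only [gk]
    rw [MeasureTheory.integral_const_mul, key_integral k]
  have hsplit : ∀ N, I = Ssum N + ∫ x in Set.Ioo (0:ℝ) 1, remN N x := by
    intro N
    have hpt : ∀ x ∈ Set.Ioo (0:ℝ) 1,
        (1 - x) / ((1 + x) * Real.log x) = (∑ k ∈ Finset.range N, gk k x) + remN N x := by
      intro x hx
      rw [sum_identity hx.1 hx.2, remN]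
      ring
    rw [hI, setIntegral_congr_fun measurableSet_Ioo hpt,
      integral_add (integrable_finset_sum _ (fun k _ => integrable_gk k)) (integrable_remN N),
      integral_finset_sum _ (fun k _ => integrable_gk k)]
    congr 1
    rw [Ssum]
    exact Finset.sum_congr rfl fun k _ => hgkint k
  have h0 : Tendsto (fun N => ∫ x in Set.Ioo (0:ℝ) 1, remN N x) atTop (nhds 0) := by
    simpa using remN_tendsto_zero
  have hS2 : Tendsto Ssum atTop (nhds I) := by
    have h1 : Tendsto (fun N => I - ∫ x in Set.Ioo (0:ℝ) 1, remN N x) atTop (nhds (I - 0)) :=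
      tendsto_const_nhds.sub h0
    have heq : (fun N => I - ∫ x in Set.Ioo (0:ℝ) 1, remN N x) = Ssum :=
      funext fun N => by rw [hsplit N]; ring
    rw [heq] at h1
    simpa using h1
  exact tendsto_nhds_unique hS2 S_tendsto
end

section
/- The double integral ∬_{[0,1]^2} (1−x)/((1−xy)·ln(xy)) dx dy converges and equals −γ; equivalently, γ = −∬_{[0,1]^2} (1−x)/((1−xy)·ln(xy)) dx dy, where γ is Euler's constant. -/
/-!
Since `log (x y) < 0`, the integrand is `-g` with `g = (1 - x) / ((1 - x y) (-log (x y))) ≥ 0`.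
Expanding `1 / (1 - u) = ∑ uⁿ` and `1 / (-log u) = ∫₀^∞ uᵗ dt` and using Tonelli,
`∬ g = ∑ₙ ∫₀^∞ ((s + 1)⁻¹ - (s + 2)⁻¹) (s + 1)⁻¹ dt` with `s = n + t`. An antiderivative is
`log (1 + w) - w` for `w = (s + 1)⁻¹`, so the `n`-th term is `1/(n+1) - log (1 + 1/(n+1))`,
and these telescope to `harmonic N - log (N + 1) → γ`.
-/

open MeasureTheory Real Set Filter Topology

lemma lintegral_Ioi_const_rpow {u : ℝ} (hu₀ : 0 < u) (hu₁ : u < 1) :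
    ∫⁻ t in Ioi (0 : ℝ), ENNReal.ofReal (u ^ t) = ENNReal.ofReal (-log u)⁻¹ := by
  have hlog : log u < 0 := log_neg hu₀ hu₁
  simp_rw [rpow_def_of_pos hu₀]
  rw [← ofReal_integral_eq_lintegral_ofReal (integrableOn_exp_mul_Ioi hlog 0)
    (ae_of_all _ fun _ => (exp_pos _).le), integral_exp_mul_Ioi hlog 0]
  simp [div_eq_mul_inv, inv_neg]

lemma ofReal_inv_mul_inv_neg_log_eq_tsum {u : ℝ} (hu₀ : 0 < u) (hu₁ : u < 1) :
    ENNReal.ofReal ((1 - u)⁻¹ * (-log u)⁻¹) =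
      ∑' n : ℕ, ∫⁻ t in Ioi (0 : ℝ), ENNReal.ofReal (u ^ ((n : ℝ) + t)) := by
  have hsplit : ∀ (n : ℕ) (t : ℝ),
      ENNReal.ofReal (u ^ ((n : ℝ) + t)) = ENNReal.ofReal (u ^ n) * ENNReal.ofReal (u ^ t) :=
    fun n t => by rw [rpow_add hu₀, rpow_natCast, ENNReal.ofReal_mul (pow_nonneg hu₀.le n)]
  simp_rw [hsplit, lintegral_const_mul' _ _ ENNReal.ofReal_ne_top,
    lintegral_Ioi_const_rpow hu₀ hu₁, ENNReal.tsum_mul_right]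
  rw [← ENNReal.ofReal_tsum_of_nonneg (fun n => pow_nonneg hu₀.le n)
      (summable_geometric_of_lt_one hu₀.le hu₁), tsum_geometric_of_lt_one hu₀.le hu₁,
    ENNReal.ofReal_mul (inv_nonneg.2 (sub_pos.2 hu₁).le)]

lemma ofReal_div_one_sub_mul_neg_log_eq_tsum {x y : ℝ} (hx : x ∈ Ioo (0 : ℝ) 1)
    (hy : y ∈ Ioo (0 : ℝ) 1) :
    ENNReal.ofReal ((1 - x) / ((1 - x * y) * -log (x * y))) =
      ∑' n : ℕ, ∫⁻ t in Ioi (0 : ℝ),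
        ENNReal.ofReal ((1 - x) * x ^ ((n : ℝ) + t)) * ENNReal.ofReal (y ^ ((n : ℝ) + t)) := by
  have hxy₀ : 0 < x * y := mul_pos hx.1 hy.1
  have hxy₁ : x * y < 1 := mul_lt_one_of_nonneg_of_lt_one_left hx.1.le hx.2 hy.2.le
  have h1x : 0 ≤ 1 - x := sub_nonneg.2 hx.2.le
  have hsplit : ∀ s : ℝ, ENNReal.ofReal (1 - x) * ENNReal.ofReal ((x * y) ^ s) =
      ENNReal.ofReal ((1 - x) * x ^ s) * ENNReal.ofReal (y ^ s) := fun s => by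
    rw [mul_rpow hx.1.le hy.1.le, ENNReal.ofReal_mul (rpow_nonneg hx.1.le s),
      ENNReal.ofReal_mul h1x, mul_assoc]
  rw [div_eq_mul_inv, mul_inv, ENNReal.ofReal_mul h1x,
    ofReal_inv_mul_inv_neg_log_eq_tsum hxy₀ hxy₁, ← ENNReal.tsum_mul_left]
  simp_rw [← lintegral_const_mul' _ _ ENNReal.ofReal_ne_top, hsplit]

lemma integral_Ioo_rpow {s : ℝ} (hs : -1 < s) : ∫ x in Ioo (0 : ℝ) 1, x ^ s = (s + 1)⁻¹ := by
  rw [← integral_Ioc_eq_integral_Ioo, ← intervalIntegral.integral_of_le zero_le_one,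
    integral_rpow (Or.inl hs), one_rpow, zero_rpow (by linarith), sub_zero, one_div]

lemma integrableOn_Ioo_rpow {s : ℝ} (hs : -1 < s) :
    IntegrableOn (fun x : ℝ => x ^ s) (Ioo 0 1) :=
  (intervalIntegral.intervalIntegrable_rpow' hs).1.mono_set Ioo_subset_Ioc_self

lemma lintegral_Ioo_rpow {s : ℝ} (hs : -1 < s) :
    ∫⁻ x in Ioo (0 : ℝ) 1, ENNReal.ofReal (x ^ s) = ENNReal.ofReal (s + 1)⁻¹ := by
  rw [← ofReal_integral_eq_lintegral_ofReal (integrableOn_Ioo_rpow hs)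
    ((ae_restrict_iff' measurableSet_Ioo).2 (ae_of_all _ fun x hx => rpow_nonneg hx.1.le s)),
    integral_Ioo_rpow hs]

lemma lintegral_Ioo_one_sub_mul_rpow {s : ℝ} (hs : -1 < s) :
    ∫⁻ x in Ioo (0 : ℝ) 1, ENNReal.ofReal ((1 - x) * x ^ s) =
      ENNReal.ofReal ((s + 1)⁻¹ - (s + 2)⁻¹) := by
  have hs' : -1 < s + 1 := by linarith
  have heq : EqOn (fun x : ℝ => (1 - x) * x ^ s) (fun x => x ^ s - x ^ (s + 1)) (Ioo 0 1) :=
    fun x hx => by simp only [rpow_add_one hx.1.ne']; ring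
  rw [← ofReal_integral_eq_lintegral_ofReal
      (((integrableOn_Ioo_rpow hs).sub (integrableOn_Ioo_rpow hs')).congr_fun heq.symm
        measurableSet_Ioo)
      ((ae_restrict_iff' measurableSet_Ioo).2 (ae_of_all _ fun x hx =>
        mul_nonneg (sub_nonneg.2 hx.2.le) (rpow_nonneg hx.1.le s))),
    setIntegral_congr_fun measurableSet_Ioo heq,
    integral_sub (integrableOn_Ioo_rpow hs) (integrableOn_Ioo_rpow hs'),
    integral_Ioo_rpow hs, integral_Ioo_rpow hs']
  ring_nf

lemma lintegral_unitSquare_one_sub_mul_rpow_mul_rpow {s : ℝ} (hs : -1 < s) :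
    ∫⁻ p in Ioo (0 : ℝ) 1 ×ˢ Ioo (0 : ℝ) 1,
        ENNReal.ofReal ((1 - p.1) * p.1 ^ s) * ENNReal.ofReal (p.2 ^ s) =
      ENNReal.ofReal (((s + 1)⁻¹ - (s + 2)⁻¹) * (s + 1)⁻¹) := by
  have hsub : 0 ≤ (s + 1)⁻¹ - (s + 2)⁻¹ :=
    sub_nonneg.2 (inv_anti₀ (by linarith) (by linarith))
  rw [Measure.volume_eq_prod, ← Measure.prod_restrict,
    lintegral_prod_mul (f := fun x => ENNReal.ofReal ((1 - x) * x ^ s))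
      (g := fun y => ENNReal.ofReal (y ^ s)) (by fun_prop) (by fun_prop),
    lintegral_Ioo_one_sub_mul_rpow hs, lintegral_Ioo_rpow hs, ENNReal.ofReal_mul hsub]

lemma hasDerivAt_log_one_add_inv_sub_inv {a t : ℝ} (h : 0 < a + t + 1) :
    HasDerivAt (fun t => log (1 + (a + t + 1)⁻¹) - (a + t + 1)⁻¹)
      (((a + t + 1)⁻¹ - (a + t + 2)⁻¹) * (a + t + 1)⁻¹) t := by
  have hw : HasDerivAt (fun t => (a + t + 1)⁻¹) (-1 / (a + t + 1) ^ 2) t :=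
    (((hasDerivAt_id' t).const_add a).add_const 1).inv h.ne'
  have h1 : 0 < 1 + (a + t + 1)⁻¹ := by positivity
  refine (((hw.const_add 1).log h1.ne').sub hw).congr_deriv ?_
  have h2 : a + t + 2 ≠ 0 := by linarith
  field_simp
  ring

lemma lintegral_Ioi_inv_sub_inv_mul_inv {a : ℝ} (ha : -1 < a) :
    ∫⁻ t in Ioi (0 : ℝ), ENNReal.ofReal (((a + t + 1)⁻¹ - (a + t + 2)⁻¹) * (a + t + 1)⁻¹) =
      ENNReal.ofReal ((a + 1)⁻¹ - log (1 + (a + 1)⁻¹)) := by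
  set F : ℝ → ℝ := fun t => log (1 + (a + t + 1)⁻¹) - (a + t + 1)⁻¹
  have hderiv : ∀ t ∈ Ici (0 : ℝ), HasDerivAt F
      (((a + t + 1)⁻¹ - (a + t + 2)⁻¹) * (a + t + 1)⁻¹) t :=
    fun t ht => hasDerivAt_log_one_add_inv_sub_inv (by linarith [mem_Ici.1 ht])
  have hnonneg : ∀ t ∈ Ioi (0 : ℝ), 0 ≤ ((a + t + 1)⁻¹ - (a + t + 2)⁻¹) * (a + t + 1)⁻¹ := by
    intro t ht
    have hpos : 0 < a + t + 1 := by linarith [mem_Ioi.1 ht]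
    have hle : (a + t + 2)⁻¹ ≤ (a + t + 1)⁻¹ := inv_anti₀ hpos (by linarith)
    exact mul_nonneg (sub_nonneg.2 hle) (inv_nonneg.2 hpos.le)
  have hlim : Tendsto F atTop (𝓝 0) := by
    have hw : Tendsto (fun t : ℝ => (a + t + 1)⁻¹) atTop (𝓝 0) :=
      (tendsto_atTop_add_const_right _ 1
        (tendsto_atTop_add_const_left _ a tendsto_id)).inv_tendsto_atTop
    have hc : ContinuousAt (fun w : ℝ => log (1 + w) - w) 0 :=
      ((continuousAt_const.add continuousAt_id).log (by norm_num)).sub continuousAt_id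
    simpa [F, Function.comp_def] using hc.tendsto.comp hw
  rw [← ofReal_integral_eq_lintegral_ofReal
      (integrableOn_Ioi_deriv_of_nonneg' hderiv hnonneg hlim)
      ((ae_restrict_iff' measurableSet_Ioi).2 (ae_of_all _ hnonneg)),
    integral_Ioi_of_hasDerivAt_of_nonneg' hderiv hnonneg hlim]
  simp [F]

lemma eulerMascheroniSeq_succ_sub (n : ℕ) :
    eulerMascheroniSeq (n + 1) - eulerMascheroniSeq n =
      ((n : ℝ) + 1)⁻¹ - log (1 + ((n : ℝ) + 1)⁻¹) := by
  have h : 1 + ((n : ℝ) + 1)⁻¹ = ((n : ℝ) + 2) / ((n : ℝ) + 1) := by field_simp; ring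
  rw [h, log_div (by positivity) (by positivity)]
  simp only [eulerMascheroniSeq, harmonic_succ]
  push_cast
  ring_nf

lemma inv_sub_log_one_add_inv_nonneg (n : ℕ) :
    0 ≤ ((n : ℝ) + 1)⁻¹ - log (1 + ((n : ℝ) + 1)⁻¹) := by
  linarith [log_le_sub_one_of_pos (by positivity : (0 : ℝ) < 1 + ((n : ℝ) + 1)⁻¹)]

lemma hasSum_inv_sub_log_one_add_inv :
    HasSum (fun n : ℕ => ((n : ℝ) + 1)⁻¹ - log (1 + ((n : ℝ) + 1)⁻¹))
      eulerMascheroniConstant := by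
  rw [hasSum_iff_tendsto_nat_of_nonneg inv_sub_log_one_add_inv_nonneg]
  simp_rw [← eulerMascheroniSeq_succ_sub, Finset.sum_range_sub, eulerMascheroniSeq_zero,
    sub_zero]
  exact tendsto_eulerMascheroniSeq

lemma lintegral_unitSquare_div_one_sub_mul_neg_log :
    ∫⁻ p in Ioo (0 : ℝ) 1 ×ˢ Ioo (0 : ℝ) 1,
        ENNReal.ofReal ((1 - p.1) / ((1 - p.1 * p.2) * -log (p.1 * p.2))) =
      ENNReal.ofReal eulerMascheroniConstant := by
  calc _ = ∫⁻ p in Ioo (0 : ℝ) 1 ×ˢ Ioo (0 : ℝ) 1, ∑' n : ℕ, ∫⁻ t in Ioi (0 : ℝ),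
          ENNReal.ofReal ((1 - p.1) * p.1 ^ ((n : ℝ) + t)) *
            ENNReal.ofReal (p.2 ^ ((n : ℝ) + t)) :=
        setLIntegral_congr_fun (measurableSet_Ioo.prod measurableSet_Ioo) fun p hp =>
          ofReal_div_one_sub_mul_neg_log_eq_tsum hp.1 hp.2
    _ = ∑' n : ℕ, ∫⁻ t in Ioi (0 : ℝ), ∫⁻ p in Ioo (0 : ℝ) 1 ×ˢ Ioo (0 : ℝ) 1,
          ENNReal.ofReal ((1 - p.1) * p.1 ^ ((n : ℝ) + t)) *
            ENNReal.ofReal (p.2 ^ ((n : ℝ) + t)) := by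
        rw [lintegral_tsum (fun n => by fun_prop)]
        exact tsum_congr fun n => lintegral_lintegral_swap (by fun_prop)
    _ = ∑' n : ℕ, ENNReal.ofReal (((n : ℝ) + 1)⁻¹ - log (1 + ((n : ℝ) + 1)⁻¹)) := by
        refine tsum_congr fun n => ?_
        have hn : (0 : ℝ) ≤ n := n.cast_nonneg
        rw [← lintegral_Ioi_inv_sub_inv_mul_inv (by linarith)]
        exact setLIntegral_congr_fun measurableSet_Ioi fun t ht =>
          lintegral_unitSquare_one_sub_mul_rpow_mul_rpow (by linarith [mem_Ioi.1 ht])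
    _ = ENNReal.ofReal eulerMascheroniConstant := by
        rw [← ENNReal.ofReal_tsum_of_nonneg inv_sub_log_one_add_inv_nonneg
          hasSum_inv_sub_log_one_add_inv.summable, hasSum_inv_sub_log_one_add_inv.tsum_eq]

/-- ∬_{[0,1]²} (1−x)/((1−xy)·ln(xy)) dx dy converges and equals −γ. -/
theorem stmt_5 :
    IntegrableOn (fun p : ℝ × ℝ => (1 - p.1) / ((1 - p.1 * p.2) * Real.log (p.1 * p.2)))
        (Set.Ioo 0 1 ×ˢ Set.Ioo 0 1) ∧
      ∫ p in (Set.Ioo (0:ℝ) 1 ×ˢ Set.Ioo (0:ℝ) 1),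
          (1 - p.1) / ((1 - p.1 * p.2) * Real.log (p.1 * p.2)) =
        -Real.eulerMascheroniConstant := by
  set g : ℝ × ℝ → ℝ := fun p => (1 - p.1) / ((1 - p.1 * p.2) * -log (p.1 * p.2))
  have hfg : (fun p : ℝ × ℝ => (1 - p.1) / ((1 - p.1 * p.2) * log (p.1 * p.2))) = -g := by
    ext p
    simp only [g, Pi.neg_apply, mul_neg, div_neg, neg_neg]
  have hg_nonneg : 0 ≤ᵐ[volume.restrict (Ioo (0 : ℝ) 1 ×ˢ Ioo (0 : ℝ) 1)] g := by
    refine (ae_restrict_iff' (measurableSet_Ioo.prod measurableSet_Ioo)).2 (ae_of_all _ ?_)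
    rintro ⟨x, y⟩ ⟨hx, hy⟩
    have hxy₁ : x * y < 1 := mul_lt_one_of_nonneg_of_lt_one_left hx.1.le hx.2 hy.2.le
    have hlog : log (x * y) ≤ 0 := log_nonpos (mul_pos hx.1 hy.1).le hxy₁.le
    exact div_nonneg (sub_nonneg.2 hx.2.le)
      (mul_nonneg (sub_nonneg.2 hxy₁.le) (neg_nonneg.2 hlog))
  have hg_meas : AEStronglyMeasurable g (volume.restrict (Ioo (0 : ℝ) 1 ×ˢ Ioo (0 : ℝ) 1)) := by
    fun_prop
  have hg_int : IntegrableOn g (Ioo (0 : ℝ) 1 ×ˢ Ioo (0 : ℝ) 1) :=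
    (lintegral_ofReal_ne_top_iff_integrable hg_meas hg_nonneg).1
      (lintegral_unitSquare_div_one_sub_mul_neg_log ▸ ENNReal.ofReal_ne_top)
  refine ⟨hfg ▸ hg_int.neg, ?_⟩
  rw [hfg, Pi.neg_def, integral_neg, integral_eq_lintegral_of_nonneg_ae hg_nonneg hg_meas,
    lintegral_unitSquare_div_one_sub_mul_neg_log,
    ENNReal.toReal_ofReal (by linarith [one_half_lt_eulerMascheroniConstant])]
end

section
/- For every complex number s with Re(s) > 0, the double series ∑_{n=0}^∞ (1/2^{n+1}) ∑_{k=0}^n (−1)^k · binom(n,k) · (k+1)^{−s} converges and equals the alternating zeta value ∑_{k=1}^∞ (−1)^{k−1}/k^s. -/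
/-!
Write `S_k` for the partial sums of `∑ (-1)^k (k+1)^{-s}`. Pascal's rule gives
`∑_{n<N} 2^{-(n+1)} ∑_{k≤n} (-1)^k C(n,k) (k+1)^{-s} = 2^{-N} ∑_{k≤N} C(N,k) S_k`, so the double
series is the Euler (binomial) mean of `(S_k)`. These means are regular, because the binomial
weights `C(N,k)/2^N` sum to one and tend to zero for each fixed `k`. It remains to see that `S_k`
converges: by Abel summation this is Dirichlet's test, where the monotonicity of the coefficients
is replaced by the summability of `‖(k+2)^{-s} - (k+1)^{-s}‖ ≤ ‖s‖ (k+1)^{-Re s - 1}`.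
-/

open Filter Complex Finset Topology

section DirichletTest

variable {𝕜 E : Type*} [NormedField 𝕜] [NormedAddCommGroup E] [NormedSpace 𝕜 E]

theorem cauchySeq_series_smul_of_summable_norm_sub {f : ℕ → 𝕜} {z : ℕ → E} {b : ℝ}
    (hf0 : Tendsto f atTop (𝓝 0)) (hfv : Summable fun n ↦ ‖f (n + 1) - f n‖)
    (hzb : ∀ n, ‖∑ i ∈ range n, z i‖ ≤ b) :
    CauchySeq fun n ↦ ∑ i ∈ range n, f i • z i := by
  have hparts : ∀ n, ∑ i ∈ range (n + 1), f i • z i = f n • ∑ i ∈ range (n + 1), z i -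
      ∑ i ∈ range n, (f (i + 1) - f i) • ∑ j ∈ range (i + 1), z j := fun n ↦ by
    simpa using sum_range_by_parts f z (n + 1)
  rw [← cauchySeq_shift 1]
  simp_rw [hparts, sub_eq_add_neg]
  refine CauchySeq.add (Tendsto.cauchySeq (x := 0) ?_) (CauchySeq.neg ?_)
  · exact NormedField.tendsto_zero_smul_of_tendsto_zero_of_bounded hf0
      ⟨b, eventually_map.mpr <| Eventually.of_forall fun n ↦ hzb (n + 1)⟩
  · refine cauchySeq_range_of_norm_bounded (hfv.mul_right b).hasSum.tendsto_sum_nat.cauchySeq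
      fun i ↦ ?_
    rw [norm_smul, ← sub_eq_add_neg]
    exact mul_le_mul_of_nonneg_left (hzb _) (norm_nonneg _)

end DirichletTest

theorem norm_sum_range_neg_one_pow_le (n : ℕ) : ‖∑ i ∈ range n, (-1 : ℂ) ^ i‖ ≤ 1 := by
  rw [neg_one_geom_sum]
  split_ifs <;> simp

theorem norm_ofReal_cpow_neg_sub_le {s : ℂ} (hs : -1 ≤ s.re) {a b : ℝ} (ha : 0 < a)
    (hab : a ≤ b) :
    ‖(b : ℂ) ^ (-s) - (a : ℂ) ^ (-s)‖ ≤ ‖s‖ * a ^ (-(s.re + 1)) * (b - a) := by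
  have hderiv : ∀ x ∈ Set.Icc a b, HasDerivWithinAt (fun y : ℝ ↦ (y : ℂ) ^ (-s))
      (-s * (x : ℂ) ^ (-s - 1)) (Set.Icc a b) x := fun x hx ↦
    ((hasStrictDerivAt_cpow_const (ofReal_mem_slitPlane.2 (ha.trans_le hx.1))).hasDerivAt
      |>.comp_ofReal).hasDerivWithinAt
  refine norm_image_sub_le_of_norm_deriv_le_segment' hderiv (fun x hx ↦ ?_) b ⟨hab, le_rfl⟩
  have hre : (-s - 1).re = -(s.re + 1) := by simp; ring
  rw [norm_mul, norm_neg, norm_cpow_eq_rpow_re_of_pos (ha.trans_le hx.1), hre]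
  exact mul_le_mul_of_nonneg_left (Real.rpow_le_rpow_of_nonpos ha hx.1 (by linarith))
    (norm_nonneg s)

theorem tendsto_natCast_succ_cpow_neg {s : ℂ} (hs : 0 < s.re) :
    Tendsto (fun k : ℕ ↦ ((k + 1 : ℕ) : ℂ) ^ (-s)) atTop (𝓝 0) := by
  rw [tendsto_zero_iff_norm_tendsto_zero]
  simp_rw [norm_natCast_cpow_of_pos (Nat.succ_pos _), neg_re]
  exact (tendsto_rpow_neg_atTop hs).comp
    (tendsto_natCast_atTop_atTop.comp (tendsto_add_atTop_nat 1))

theorem summable_norm_natCast_succ_cpow_neg_sub {s : ℂ} (hs : 0 < s.re) :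
    Summable fun k : ℕ ↦ ‖((k + 1 + 1 : ℕ) : ℂ) ^ (-s) - ((k + 1 : ℕ) : ℂ) ^ (-s)‖ := by
  have hsum : Summable fun k : ℕ ↦ ‖s‖ * ((k + 1 : ℕ) : ℝ) ^ (-(s.re + 1)) :=
    ((summable_nat_add_iff 1).2 (Real.summable_nat_rpow.2 (by linarith))).mul_left _
  refine hsum.of_nonneg_of_le (fun _ ↦ norm_nonneg _) fun k ↦ ?_
  have h := norm_ofReal_cpow_neg_sub_le (s := s) (by linarith) (a := k + 1) (b := k + 1 + 1)
    (by positivity) (by linarith)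
  push_cast at h ⊢
  simpa using h

theorem exists_tendsto_sum_neg_one_pow_mul_cpow {s : ℂ} (hs : 0 < s.re) :
    ∃ L, Tendsto (fun N ↦ ∑ k ∈ range N, (-1 : ℂ) ^ k * ((k + 1 : ℕ) : ℂ) ^ (-s)) atTop
      (𝓝 L) := by
  refine cauchySeq_tendsto_of_complete ?_
  simpa only [smul_eq_mul, mul_comm] using cauchySeq_series_smul_of_summable_norm_sub
    (tendsto_natCast_succ_cpow_neg hs) (summable_norm_natCast_succ_cpow_neg_sub hs)
    norm_sum_range_neg_one_pow_le

theorem sum_range_succ_choose_nsmul_partialSum {M : Type*} [AddCommMonoid M] (b : ℕ → M)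
    (N : ℕ) :
    ∑ k ∈ range (N + 2), (N + 1).choose k • ∑ j ∈ range k, b j =
      2 • ∑ k ∈ range (N + 1), N.choose k • ∑ j ∈ range k, b j +
        ∑ k ∈ range (N + 1), N.choose k • b k := by
  rw [sum_choose_succ_nsmul (fun k _ ↦ ∑ j ∈ range k, b j)]
  simp only [sum_range_succ b, nsmul_add, sum_add_distrib, two_nsmul, add_assoc]

def eulerMean {K : Type*} [DivisionSemiring K] (u : ℕ → K) (N : ℕ) : K :=
  (2 ^ N)⁻¹ * ∑ k ∈ range (N + 1), (N.choose k : K) * u k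

theorem sum_range_two_pow_inv_mul_sum_choose_mul {K : Type*} [Field K] [NeZero (2 : K)]
    (b : ℕ → K) (N : ℕ) :
    ∑ n ∈ range N, (2 ^ (n + 1))⁻¹ * ∑ k ∈ range (n + 1), (n.choose k : K) * b k =
      eulerMean (fun k ↦ ∑ j ∈ range k, b j) N := by
  induction N with
  | zero => simp [eulerMean]
  | succ N ih =>
    have h := sum_range_succ_choose_nsmul_partialSum b N
    simp only [nsmul_eq_mul, Nat.cast_ofNat] at h
    rw [sum_range_succ, ih, eulerMean, eulerMean, h]
    field_simp
    ring

theorem tendsto_two_pow_inv_mul_choose (k : ℕ) :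
    Tendsto (fun N : ℕ ↦ (2 ^ N : ℝ)⁻¹ * N.choose k) atTop (𝓝 0) := by
  refine squeeze_zero (fun N ↦ by positivity) (fun N ↦ ?_)
    (tendsto_pow_const_div_const_pow_of_one_lt k one_lt_two)
  rw [inv_mul_eq_div]
  gcongr
  exact_mod_cast Nat.choose_le_pow N k

theorem eulerMean_le_sum_range_add_of_le {g : ℕ → ℝ} (hg0 : ∀ k, 0 ≤ g k) {ε : ℝ} {K : ℕ}
    (hK : ∀ k ≥ K, g k ≤ ε) (N : ℕ) :
    eulerMean g N ≤ (2 ^ N)⁻¹ * ∑ k ∈ range K, (N.choose k : ℝ) * g k + ε := by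
  have hhead : ∑ k ∈ (range (N + 1)).filter (· < K), (N.choose k : ℝ) * g k ≤
      ∑ k ∈ range K, (N.choose k : ℝ) * g k :=
    sum_le_sum_of_subset_of_nonneg (fun k hk ↦ mem_range.2 (mem_filter.1 hk).2)
      fun k _ _ ↦ mul_nonneg (Nat.cast_nonneg _) (hg0 k)
  have htail : ∑ k ∈ (range (N + 1)).filter (¬ · < K), (N.choose k : ℝ) * g k ≤ 2 ^ N * ε :=
    calc _ ≤ ∑ k ∈ (range (N + 1)).filter (¬ · < K), (N.choose k : ℝ) * ε :=
          sum_le_sum fun k hk ↦ mul_le_mul_of_nonneg_left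
            (hK k (not_lt.1 (mem_filter.1 hk).2)) (Nat.cast_nonneg _)
      _ ≤ ∑ k ∈ range (N + 1), (N.choose k : ℝ) * ε :=
          sum_le_sum_of_subset_of_nonneg (filter_subset _ _) fun k _ _ ↦
            mul_nonneg (Nat.cast_nonneg _) ((hg0 K).trans (hK K le_rfl))
      _ = 2 ^ N * ε := by
          rw [← sum_mul, ← Nat.cast_sum, Nat.sum_range_choose, Nat.cast_pow, Nat.cast_ofNat]
  rw [eulerMean, ← sum_filter_add_sum_filter_not _ (· < K)]
  calc _ ≤ (2 ^ N)⁻¹ * (∑ k ∈ range K, (N.choose k : ℝ) * g k + 2 ^ N * ε) :=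
        mul_le_mul_of_nonneg_left (add_le_add hhead htail) (by positivity)
    _ = _ := by rw [mul_add, inv_mul_cancel_left₀ (by positivity)]

theorem tendsto_eulerMean_zero_of_nonneg {g : ℕ → ℝ} (hg0 : ∀ k, 0 ≤ g k)
    (hg : Tendsto g atTop (𝓝 0)) : Tendsto (eulerMean g) atTop (𝓝 0) := by
  refine tendsto_order.2 ⟨fun a ha ↦ Eventually.of_forall fun N ↦ ha.trans_le ?_, fun ε hε ↦ ?_⟩
  · exact mul_nonneg (by positivity) (sum_nonneg fun k _ ↦ mul_nonneg (Nat.cast_nonneg _) (hg0 k))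
  obtain ⟨K, hK⟩ := eventually_atTop.1 (hg.eventually (ge_mem_nhds (half_pos hε)))
  have hhead : Tendsto (fun N : ℕ ↦ (2 ^ N)⁻¹ * ∑ k ∈ range K, (N.choose k : ℝ) * g k)
      atTop (𝓝 0) := by
    simpa [mul_sum, ← mul_assoc] using tendsto_finsetSum (range K) fun k _ ↦
      (tendsto_two_pow_inv_mul_choose k).mul_const (g k)
  filter_upwards [hhead.eventually (gt_mem_nhds (half_pos hε))] with N hN
  linarith [eulerMean_le_sum_range_add_of_le hg0 hK N]

section EulerMean

variable {𝕜 : Type*} [RCLike 𝕜]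

theorem eulerMean_sub_const (u : ℕ → 𝕜) (c : 𝕜) (N : ℕ) :
    eulerMean u N - c = eulerMean (fun k ↦ u k - c) N := by
  have h2 : ∑ k ∈ range (N + 1), (N.choose k : 𝕜) = 2 ^ N := by
    exact_mod_cast Nat.sum_range_choose N
  simp only [eulerMean, mul_sub, sum_sub_distrib, ← sum_mul, h2]
  field_simp

theorem norm_eulerMean_le (u : ℕ → 𝕜) (N : ℕ) :
    ‖eulerMean u N‖ ≤ eulerMean (fun k ↦ ‖u k‖) N := by
  rw [eulerMean, eulerMean, norm_mul, norm_inv, norm_pow, RCLike.norm_ofNat]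
  refine mul_le_mul_of_nonneg_left ((norm_sum_le _ _).trans_eq (sum_congr rfl fun k _ ↦ ?_))
    (by positivity)
  rw [norm_mul, RCLike.norm_natCast]

theorem tendsto_eulerMean {u : ℕ → 𝕜} {L : 𝕜}
    (h : Tendsto u atTop (𝓝 L)) : Tendsto (eulerMean u) atTop (𝓝 L) := by
  rw [← tendsto_sub_nhds_zero_iff]
  simp_rw [eulerMean_sub_const]
  refine squeeze_zero_norm (norm_eulerMean_le _) (tendsto_eulerMean_zero_of_nonneg
    (fun k ↦ norm_nonneg _) ?_)
  simpa using (tendsto_sub_nhds_zero_iff.2 h).norm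

end EulerMean

/-- For Re(s) > 0, the Hasse/Euler-transform double series converges and equals
the alternating zeta value ∑_{k=1}^∞ (−1)^{k−1}/k^s. -/
theorem stmt_7 (s : ℂ) (hs : 0 < s.re) :
    ∃ L : ℂ,
      Tendsto (fun N : ℕ => ∑ k ∈ Finset.range N,
          (-1 : ℂ) ^ k / ((k + 1 : ℕ) : ℂ) ^ s) atTop (nhds L) ∧
      Tendsto (fun N : ℕ => ∑ n ∈ Finset.range N,
          (1 / 2 ^ (n + 1) : ℂ) * ∑ k ∈ Finset.range (n + 1),
            (-1 : ℂ) ^ k * (n.choose k : ℂ) * ((k + 1 : ℕ) : ℂ) ^ (-s))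
        atTop (nhds L) := by
  obtain ⟨L, hL⟩ := exists_tendsto_sum_neg_one_pow_mul_cpow hs
  refine ⟨L, by simpa only [cpow_neg, div_eq_mul_inv] using hL, ?_⟩
  convert tendsto_eulerMean hL using 1
  ext N
  rw [← sum_range_two_pow_inv_mul_sum_choose_mul]
  refine sum_congr rfl fun n _ ↦ ?_
  rw [one_div]
  congr 1
  exact sum_congr rfl fun k _ ↦ by ring
end

section
/- The double integral ∫_0^∞ ∫_0^1 x^y · (1−x)/(1+x) dx dy converges and equals ln(π/2), where the outer integral is over y ∈ [0, ∞) and the inner over x ∈ [0, 1]. -/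
/-!
Integrating first in `y`, `∫₀^∞ x^y dy = 1 / (-log x)`, so the double integral equals
`∫₀¹ (1 - x) / ((1 + x) (-log x)) dx`, whose integrand lies in `[0, 1]`; this gives
integrability by Tonelli. Expanding `(1 - x) / (1 + x) = ∑ x^(2n) (1 - x)^2`, every term
is a difference of Frullani-type integrals
`∫₀¹ (x^a - x^b) / (-log x) dx = ∫_a^b ∫₀¹ x^t dx dt = log ((b + 1) / (a + 1))`,
which gives the logarithm of the `n`-th Wallis factor `(2n+2)² / ((2n+1)(2n+3))`.
The Wallis product sums the series to `log (π / 2)`.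
-/

open MeasureTheory Real Set Filter

section ConstRpow

variable {x : ℝ}

lemma integral_const_rpow_Icc (hx₀ : 0 < x) (hx₁ : x ≠ 1) {a b : ℝ} (hab : a ≤ b) :
    ∫ t in Icc a b, x ^ t = (x ^ a - x ^ b) / -log x := by
  have hlog : log x ≠ 0 := log_ne_zero_of_pos_of_ne_one hx₀ hx₁
  simp_rw [rpow_def_of_pos hx₀]
  rw [integral_Icc_eq_integral_Ioc, ← intervalIntegral.integral_of_le hab,
    intervalIntegral.integral_comp_mul_left (fun t => exp t) hlog, integral_exp, smul_eq_mul]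
  field_simp
  ring

lemma integrableOn_const_rpow_Ici (hx₀ : 0 < x) (hx₁ : x < 1) (c : ℝ) :
    IntegrableOn (fun y => x ^ y) (Ici c) := by
  rw [integrableOn_Ici_iff_integrableOn_Ioi]
  simp_rw [rpow_def_of_pos hx₀]
  exact integrableOn_exp_mul_Ioi (log_neg hx₀ hx₁) c

lemma integral_const_rpow_Ici (hx₀ : 0 < x) (hx₁ : x < 1) (c : ℝ) :
    ∫ y in Ici c, x ^ y = x ^ c / -log x := by
  rw [integral_Ici_eq_integral_Ioi]
  simp_rw [rpow_def_of_pos hx₀]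
  rw [integral_exp_mul_Ioi (log_neg hx₀ hx₁), neg_div, div_neg]

lemma integral_const_rpow_mul_Ici_zero (hx₀ : 0 < x) (hx₁ : x < 1) (c : ℝ) :
    ∫ y in Ici (0 : ℝ), x ^ y * c = c / -log x := by
  rw [integral_mul_const, integral_const_rpow_Ici hx₀ hx₁, rpow_zero]
  ring

end ConstRpow

lemma integral_rpow_Ioo_zero_one {t : ℝ} (ht : -1 < t) :
    ∫ x in Ioo 0 1, x ^ t = 1 / (t + 1) := by
  rw [← integral_Ioc_eq_integral_Ioo, ← intervalIntegral.integral_of_le zero_le_one,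
    integral_rpow (Or.inl ht), one_rpow, zero_rpow (by linarith), sub_zero]

section Frullani

variable {a b : ℝ}

lemma integrable_rpow_Ioo_prod_Icc (ha : 0 ≤ a) :
    Integrable (fun p : ℝ × ℝ => p.1 ^ p.2)
      ((volume.restrict (Ioo 0 1)).prod (volume.restrict (Icc a b))) := by
  rw [Measure.prod_restrict, ← Measure.volume_eq_prod]
  refine Measure.integrableOn_of_bounded (M := 1) ?_
    (measurable_fst.pow measurable_snd).aestronglyMeasurable ?_
  · simp [Measure.volume_eq_prod, Measure.prod_prod]
  · filter_upwards [ae_restrict_mem (measurableSet_Ioo.prod measurableSet_Icc)] with p hp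
    rw [norm_of_nonneg (rpow_nonneg hp.1.1.le _)]
    exact rpow_le_one hp.1.1.le hp.1.2.le (ha.trans hp.2.1)

lemma integrableOn_rpow_sub_rpow_div_neg_log (ha : 0 ≤ a) (hab : a ≤ b) :
    IntegrableOn (fun x => (x ^ a - x ^ b) / -log x) (Ioo 0 1) := by
  refine (integrable_rpow_Ioo_prod_Icc (b := b) ha).integral_prod_left.congr ?_
  filter_upwards [ae_restrict_mem measurableSet_Ioo] with x hx
  exact integral_const_rpow_Icc hx.1 hx.2.ne hab

lemma integral_rpow_sub_rpow_div_neg_log (ha : 0 ≤ a) (hab : a ≤ b) :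
    ∫ x in Ioo 0 1, (x ^ a - x ^ b) / -log x = log ((b + 1) / (a + 1)) := by
  calc ∫ x in Ioo 0 1, (x ^ a - x ^ b) / -log x
      = ∫ x in Ioo 0 1, ∫ t in Icc a b, x ^ t :=
        setIntegral_congr_fun measurableSet_Ioo
          fun x hx => (integral_const_rpow_Icc hx.1 hx.2.ne hab).symm
    _ = ∫ t in Icc a b, ∫ x in Ioo 0 1, x ^ t :=
        integral_integral_swap (integrable_rpow_Ioo_prod_Icc ha)
    _ = ∫ t in a..b, 1 / (t + 1) := by
        rw [integral_Icc_eq_integral_Ioc, ← intervalIntegral.integral_of_le hab]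
        refine intervalIntegral.integral_congr fun t ht => ?_
        rw [uIcc_of_le hab] at ht
        exact integral_rpow_Ioo_zero_one (by linarith [ht.1])
    _ = log ((b + 1) / (a + 1)) := by
        rw [intervalIntegral.integral_comp_add_right (fun u => 1 / u), integral_one_div]
        exact notMem_uIcc_of_lt (by linarith) (by linarith)

end Frullani

noncomputable def wallisFactor (n : ℕ) : ℝ :=
  (2 * n + 2) / (2 * n + 1) * ((2 * n + 2) / (2 * n + 3))

lemma one_le_wallisFactor (n : ℕ) : 1 ≤ wallisFactor n := by
  rw [wallisFactor, div_mul_div_comm, one_le_div (by positivity)]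
  nlinarith

lemma hasSum_log_wallisFactor :
    HasSum (fun n => log (wallisFactor n)) (log (π / 2)) := by
  rw [hasSum_iff_tendsto_nat_of_nonneg fun n => log_nonneg (one_le_wallisFactor n)]
  have h_prod := (continuousAt_log (by positivity)).tendsto.comp tendsto_prod_pi_div_two
  exact h_prod.congr fun k =>
    log_prod fun i _ => (zero_lt_one.trans_le (one_le_wallisFactor i)).ne'

section Series

variable {x : ℝ}

lemma hasSum_sq_pow_mul_one_sub_sq (hx₀ : 0 ≤ x) (hx₁ : x < 1) :
    HasSum (fun n : ℕ => (x ^ 2) ^ n * (1 - x) ^ 2) ((1 - x) / (1 + x)) := by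
  have h := (hasSum_geometric_of_lt_one (by positivity) (by nlinarith : x ^ 2 < 1)).mul_right
    ((1 - x) ^ 2)
  have hx₂ : 1 - x ^ 2 ≠ 0 := by nlinarith
  rwa [show (1 - x ^ 2)⁻¹ * (1 - x) ^ 2 = (1 - x) / (1 + x) by field_simp; ring] at h

lemma sq_pow_mul_one_sub_sq (hx : 0 < x) (n : ℕ) :
    (x ^ 2) ^ n * (1 - x) ^ 2 = (x ^ (2 * n : ℝ) - x ^ (2 * n + 1 : ℝ))
      - (x ^ (2 * n + 1 : ℝ) - x ^ (2 * n + 2 : ℝ)) := by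
  rw [rpow_add hx, rpow_add hx, rpow_mul hx.le, rpow_two, rpow_one, rpow_natCast]
  ring

lemma sq_pow_mul_one_sub_sq_div_neg_log_nonneg (hx : x ∈ Ioo 0 1) (n : ℕ) :
    0 ≤ (x ^ 2) ^ n * (1 - x) ^ 2 / -log x :=
  div_nonneg (by positivity) (neg_nonneg.2 (log_nonpos hx.1.le hx.2.le))

lemma integrableOn_sq_pow_mul_one_sub_sq_div_neg_log (n : ℕ) :
    IntegrableOn (fun x => (x ^ 2) ^ n * (1 - x) ^ 2 / -log x) (Ioo 0 1) := by
  refine ((integrableOn_rpow_sub_rpow_div_neg_log (a := 2 * n) (b := 2 * n + 1)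
    (by positivity) (by linarith)).sub (integrableOn_rpow_sub_rpow_div_neg_log
    (a := 2 * n + 1) (b := 2 * n + 2) (by positivity) (by linarith))).congr_fun
    (fun x hx => ?_) measurableSet_Ioo
  simp only [Pi.sub_apply, sq_pow_mul_one_sub_sq hx.1, sub_div]

lemma integral_sq_pow_mul_one_sub_sq_div_neg_log (n : ℕ) :
    ∫ x in Ioo 0 1, (x ^ 2) ^ n * (1 - x) ^ 2 / -log x
      = log (wallisFactor n) := by
  have h₀ : (0 : ℝ) ≤ 2 * n := by positivity
  rw [setIntegral_congr_fun measurableSet_Ioo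
      fun x hx => by rw [sq_pow_mul_one_sub_sq hx.1, sub_div],
    integral_sub (integrableOn_rpow_sub_rpow_div_neg_log h₀ (by linarith))
      (integrableOn_rpow_sub_rpow_div_neg_log (by linarith) (by linarith)),
    integral_rpow_sub_rpow_div_neg_log h₀ (by linarith),
    integral_rpow_sub_rpow_div_neg_log (by linarith) (by linarith),
    ← log_div (by positivity) (by positivity), wallisFactor]
  congr 1
  field_simp
  ring

end Series

lemma integral_one_sub_div_one_add_div_neg_log :
    ∫ x in Ioo 0 1, (1 - x) / (1 + x) / -log x = log (π / 2) := by
  have h_norm (n : ℕ) : ∫ x in Ioo 0 1, ‖(x ^ 2) ^ n * (1 - x) ^ 2 / -log x‖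
      = log (wallisFactor n) := by
    rw [← integral_sq_pow_mul_one_sub_sq_div_neg_log]
    exact setIntegral_congr_fun measurableSet_Ioo
      fun x hx => norm_of_nonneg (sq_pow_mul_one_sub_sq_div_neg_log_nonneg hx n)
  calc ∫ x in Ioo 0 1, (1 - x) / (1 + x) / -log x
      = ∫ x in Ioo 0 1, ∑' n : ℕ, (x ^ 2) ^ n * (1 - x) ^ 2 / -log x :=
        setIntegral_congr_fun measurableSet_Ioo fun x hx =>
          ((hasSum_sq_pow_mul_one_sub_sq hx.1.le hx.2).div_const _).tsum_eq.symm
    _ = ∑' n : ℕ, ∫ x in Ioo 0 1, (x ^ 2) ^ n * (1 - x) ^ 2 / -log x :=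
        (integral_tsum_of_summable_integral_norm integrableOn_sq_pow_mul_one_sub_sq_div_neg_log
          (by simpa only [h_norm] using hasSum_log_wallisFactor.summable)).symm
    _ = log (π / 2) := by
        simpa only [integral_sq_pow_mul_one_sub_sq_div_neg_log] using
          hasSum_log_wallisFactor.tsum_eq

lemma one_sub_div_one_add_div_neg_log_mem_Icc {x : ℝ} (hx : x ∈ Ioo 0 1) :
    (1 - x) / (1 + x) / -log x ∈ Icc 0 1 := by
  have hlog : 0 < -log x := neg_pos.2 (log_neg hx.1 hx.2)
  have hx' : 1 - x ≤ -log x := by linarith [log_le_sub_one_of_pos hx.1]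
  refine ⟨div_nonneg (div_nonneg (by linarith [hx.2]) (by linarith [hx.1])) hlog.le,
    (div_le_one hlog).2 ?_⟩
  exact (div_le_self (by linarith [hx.2]) (by linarith [hx.1])).trans hx'

lemma integrableOn_one_sub_div_one_add_div_neg_log :
    IntegrableOn (fun x => (1 - x) / (1 + x) / -log x) (Ioo 0 1) := by
  refine Measure.integrableOn_of_bounded (M := 1) (by simp)
    (Measurable.aestronglyMeasurable (by fun_prop)) ?_
  filter_upwards [ae_restrict_mem measurableSet_Ioo] with x hx
  have h := one_sub_div_one_add_div_neg_log_mem_Icc hx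
  rw [norm_of_nonneg h.1]
  exact h.2

/-- ∫_0^∞ ∫_0^1 x^y (1−x)/(1+x) dx dy converges and equals ln(π/2). -/
theorem stmt_11 :
    IntegrableOn (fun p : ℝ × ℝ => p.1 ^ p.2 * ((1 - p.1) / (1 + p.1)))
        (Set.Icc 0 1 ×ˢ Set.Ici 0) ∧
      ∫ p in (Set.Icc (0:ℝ) 1 ×ˢ Set.Ici (0:ℝ)),
          p.1 ^ p.2 * ((1 - p.1) / (1 + p.1)) = Real.log (Real.pi / 2) := by
  have h_inner : ∀ᵐ x ∂volume.restrict (Icc (0 : ℝ) 1),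
      IntegrableOn (fun y : ℝ => x ^ y * ((1 - x) / (1 + x))) (Ici 0) ∧
        ∫ y in Ici (0 : ℝ), ‖x ^ y * ((1 - x) / (1 + x))‖ = (1 - x) / (1 + x) / -log x ∧
        ∫ y in Ici (0 : ℝ), x ^ y * ((1 - x) / (1 + x)) = (1 - x) / (1 + x) / -log x := by
    rw [Measure.restrict_congr_set Ioo_ae_eq_Icc.symm]
    filter_upwards [ae_restrict_mem measurableSet_Ioo] with x hx
    have h_eq := integral_const_rpow_mul_Ici_zero hx.1 hx.2 ((1 - x) / (1 + x))
    refine ⟨(integrableOn_const_rpow_Ici hx.1 hx.2 0).mul_const _, ?_, h_eq⟩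
    rw [← h_eq]
    refine integral_congr_ae (Eventually.of_forall fun y => norm_of_nonneg ?_)
    exact mul_nonneg (rpow_nonneg hx.1.le y) (div_nonneg (by linarith [hx.2]) (by linarith [hx.1]))
  have h_outer : IntegrableOn (fun x => (1 - x) / (1 + x) / -log x) (Icc 0 1) := by
    rw [integrableOn_Icc_iff_integrableOn_Ioo]
    exact integrableOn_one_sub_div_one_add_div_neg_log
  have h_int : Integrable (fun p : ℝ × ℝ => p.1 ^ p.2 * ((1 - p.1) / (1 + p.1)))
      ((volume.restrict (Icc 0 1)).prod (volume.restrict (Ici 0))) :=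
    (integrable_prod_iff (Measurable.aestronglyMeasurable (by fun_prop))).2
      ⟨h_inner.mono fun x hx => hx.1, h_outer.congr (h_inner.mono fun x hx => hx.2.1.symm)⟩
  rw [IntegrableOn, Measure.volume_eq_prod, ← Measure.prod_restrict, integral_prod _ h_int,
    integral_congr_ae (h_inner.mono fun x hx => hx.2.2), integral_Icc_eq_integral_Ioo]
  exact ⟨h_int, integral_one_sub_div_one_add_div_neg_log⟩
end

section
/- The sum of the series ∑_{n=1}^∞ (1/n) ∑_{k=0}^n (−1)^{k+1} · binom(n,k) · ln(k+1) equals 1. -/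
/-!
Since `log (k + 1) = ∫₀¹ k / (k x + 1) dx`, the `N`-th partial sum is the integral over `[0, 1]`
of a rational function of `x`. By the partial fraction expansion
`∑ₖ (-1)ᵏ C(n, k) / (k x + a) = n! xⁿ / ∏_{j ≤ n} (j x + a)`, the `n`-th term of that rational
function is `c_{n-1}(x) - c_n(x)` with `c_n(x) = remainderKernel n x = ∏_{j=1}^n j x / (j x + 1)`,
so the sum telescopes to `1 - c_N(x)`. Finally `0 ≤ c_N ≤ 1 / (N + 1)` on `[0, 1]`, so `∫₀¹ c_N → 0`.
-/

open Filter Real Finset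
open scoped Nat

theorem alternating_sum_range_choose_succ_mul {R : Type*} [CommRing R] (f : ℕ → R) (N : ℕ) :
    ∑ k ∈ range (N + 2), (-1) ^ k * ((N + 1).choose k : R) * f k =
      ∑ k ∈ range (N + 1), (-1) ^ k * (N.choose k : R) * (f k - f (k + 1)) := by
  have hshift : ∑ k ∈ range (N + 1), (-1) ^ k * (N.choose (k + 1) : R) * f (k + 1) =
      f 0 - ∑ k ∈ range (N + 1), (-1) ^ k * (N.choose k : R) * f k := by
    have h := sum_range_succ' (fun k => (-1) ^ k * (N.choose k : R) * f k) (N + 1)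
    rw [sum_range_succ, Nat.choose_succ_self] at h
    simp only [pow_succ, mul_neg, mul_one, Nat.cast_zero, mul_zero, zero_mul, add_zero, neg_mul,
      sum_neg_distrib, pow_zero, Nat.choose_zero_right, Nat.cast_one, one_mul] at h
    linear_combination h
  rw [sum_range_succ']
  simp only [pow_succ, mul_neg, mul_one, Nat.choose_succ_succ', Nat.cast_add, mul_add, neg_mul,
    add_mul, sum_add_distrib, sum_neg_distrib, hshift, pow_zero, Nat.choose_zero_right,
    Nat.cast_one, one_mul, mul_sub, sum_sub_distrib]
  ring

theorem alternating_sum_range_choose_div {K : Type*} [Field K] (N : ℕ) (a x : K)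
    (h : ∀ j ≤ N, j * x + a ≠ 0) :
    ∑ k ∈ range (N + 1), (-1) ^ k * (N.choose k : K) / (k * x + a) =
      N ! * x ^ N / ∏ j ∈ range (N + 1), (j * x + a) := by
  induction N generalizing a with
  | zero => simp
  | succ N ih =>
    have hshift (k : ℕ) : ((k + 1 : ℕ) : K) * x + a = k * x + (a + x) := by push_cast; ring
    have hx : ∀ j ≤ N, j * x + (a + x) ≠ 0 := fun j hj => hshift j ▸ h (j + 1) (by omega)
    have ha : a ≠ 0 := by simpa using h 0 (by omega)
    have hlast : ((N + 1 : ℕ) : K) * x + a ≠ 0 := h (N + 1) le_rfl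
    have hleft : (∏ j ∈ range (N + 1), (j * x + a))⁻¹ =
        (((N + 1 : ℕ) : K) * x + a) * (∏ j ∈ range (N + 2), (j * x + a))⁻¹ := by
      rw [prod_range_succ _ (N + 1), mul_inv, mul_left_comm, mul_inv_cancel₀ hlast, mul_one]
    have hright : (∏ j ∈ range (N + 1), (j * x + (a + x)))⁻¹ =
        a * (∏ j ∈ range (N + 2), (j * x + a))⁻¹ := by
      rw [prod_range_succ' _ (N + 1)]
      simp only [hshift, Nat.cast_zero, zero_mul, zero_add]
      rw [mul_inv, mul_left_comm, mul_inv_cancel₀ ha, mul_one]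
    simp only [div_eq_mul_inv] at ih ⊢
    rw [alternating_sum_range_choose_succ_mul (fun k => (k * x + a)⁻¹)]
    simp only [hshift, mul_sub, sum_sub_distrib]
    rw [ih a fun j hj => h j (by omega), ih (a + x) hx, hleft, hright, Nat.factorial_succ]
    push_cast
    ring

noncomputable def remainderKernel (N : ℕ) (x : ℝ) : ℝ :=
  ∏ j ∈ range N, ((j + 1) * x / ((j + 1) * x + 1))

theorem remainderKernel_zero (x : ℝ) : remainderKernel 0 x = 1 := prod_range_zero _

theorem remainderKernel_succ (N : ℕ) (x : ℝ) :
    remainderKernel (N + 1) x = remainderKernel N x * ((N + 1) * x / ((N + 1) * x + 1)) :=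
  prod_range_succ _ _

theorem remainderKernel_eq_factorial_mul_pow_div (N : ℕ) (x : ℝ) :
    remainderKernel N x = N ! * x ^ N / ∏ j ∈ range (N + 1), (j * x + 1) := by
  induction N with
  | zero => simp [remainderKernel_zero]
  | succ N ih =>
    rw [remainderKernel_succ, ih, prod_range_succ _ (N + 1), div_mul_div_comm, Nat.factorial_succ]
    push_cast
    ring

theorem remainderKernel_nonneg (N : ℕ) {x : ℝ} (hx : 0 ≤ x) : 0 ≤ remainderKernel N x :=
  prod_nonneg fun _ _ => by positivity

theorem remainderKernel_le_one_div_succ (N : ℕ) {x : ℝ} (hx₀ : 0 ≤ x) (hx₁ : x ≤ 1) :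
    remainderKernel N x ≤ 1 / (N + 1) := by
  induction N with
  | zero => simp [remainderKernel_zero]
  | succ N ih =>
    have hfactor : (N + 1) * x / ((N + 1) * x + 1) ≤ (N + 1) / (N + 2) := by
      rw [div_le_div_iff₀ (by positivity) (by positivity)]
      nlinarith
    calc remainderKernel (N + 1) x
        ≤ 1 / (N + 1) * ((N + 1) / (N + 2)) := by
          rw [remainderKernel_succ]
          exact mul_le_mul ih hfactor (by positivity) (by positivity)
      _ = 1 / ((N + 1 : ℕ) + 1) := by push_cast; field_simp; ring

theorem remainderKernel_continuousOn (N : ℕ) : ContinuousOn (remainderKernel N) (Set.Ici 0) :=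
  continuousOn_finsetProd _ fun _ _ =>
    ContinuousOn.div (by fun_prop) (by fun_prop) fun x (hx : 0 ≤ x) => by positivity

theorem remainderKernel_intervalIntegrable (N : ℕ) :
    IntervalIntegrable (remainderKernel N) MeasureTheory.volume 0 1 :=
  ((remainderKernel_continuousOn N).mono fun _ hx => by simp_all).intervalIntegrable

theorem tendsto_integral_remainderKernel :
    Tendsto (fun N => ∫ x in (0 : ℝ)..1, remainderKernel N x) atTop (nhds 0) := by
  refine squeeze_zero (fun N => ?_) (fun N => ?_) tendsto_one_div_add_atTop_nhds_zero_nat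
  · exact intervalIntegral.integral_nonneg zero_le_one fun x hx => remainderKernel_nonneg N hx.1
  · calc ∫ x in (0 : ℝ)..1, remainderKernel N x
        ≤ ∫ _ in (0 : ℝ)..1, 1 / ((N : ℝ) + 1) :=
          intervalIntegral.integral_mono_on zero_le_one (remainderKernel_intervalIntegrable N)
            intervalIntegrable_const fun x hx => remainderKernel_le_one_div_succ N hx.1 hx.2
      _ = 1 / ((N : ℝ) + 1) := by simp

theorem alternating_sum_range_choose_div_mul_add_one (N : ℕ) {x : ℝ} (hx : 0 ≤ x) :
    ∑ k ∈ range (N + 1), (-1) ^ k * (N.choose k : ℝ) / (k * x + 1) = remainderKernel N x := by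
  rw [alternating_sum_range_choose_div N 1 x fun _ _ => by positivity,
    remainderKernel_eq_factorial_mul_pow_div]

theorem alternating_sum_range_choose_mul_div (N : ℕ) (hN : N ≠ 0) {x : ℝ} (hx : 0 < x) :
    ∑ k ∈ range (N + 1), (-1) ^ (k + 1) * (N.choose k : ℝ) * (k / (k * x + 1)) =
      remainderKernel N x / x := by
  have halt : ∑ k ∈ range (N + 1), (-1) ^ k * (N.choose k : ℝ) = 0 := by
    exact_mod_cast Int.alternating_sum_range_choose_of_ne hN
  have hterm (k : ℕ) : (-1) ^ (k + 1) * (N.choose k : ℝ) * (k / (k * x + 1)) =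
      (-((-1) ^ k * (N.choose k : ℝ)) + (-1) ^ k * (N.choose k : ℝ) / (k * x + 1)) / x := by
    field_simp
    ring
  simp only [hterm, ← sum_div, sum_add_distrib, sum_neg_distrib, halt, neg_zero, zero_add,
    alternating_sum_range_choose_div_mul_add_one N hx.le]

theorem sum_Icc_one_div_mul_alternating_sum_range_choose_mul_div (N : ℕ) {x : ℝ} (hx : 0 < x) :
    ∑ n ∈ Icc 1 N, 1 / (n : ℝ) *
        ∑ k ∈ range (n + 1), (-1) ^ (k + 1) * (n.choose k : ℝ) * (k / (k * x + 1)) =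
      1 - remainderKernel N x := by
  induction N with
  | zero => simp [remainderKernel_zero]
  | succ N ih =>
    rw [sum_Icc_succ_top (by omega), ih,
      alternating_sum_range_choose_mul_div (N + 1) N.succ_ne_zero hx, remainderKernel_succ]
    push_cast
    field_simp
    ring

noncomputable def partialSum (N : ℕ) (x : ℝ) : ℝ :=
  ∑ n ∈ Icc 1 N, 1 / (n : ℝ) *
    ∑ k ∈ range (n + 1), (-1) ^ (k + 1) * (n.choose k : ℝ) * log (k * x + 1)

theorem hasDerivAt_partialSum (N : ℕ) {x : ℝ} (hx : 0 ≤ x) :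
    HasDerivAt (partialSum N)
      (∑ n ∈ Icc 1 N, 1 / (n : ℝ) *
        ∑ k ∈ range (n + 1), (-1) ^ (k + 1) * (n.choose k : ℝ) * (k / (k * x + 1))) x := by
  refine HasDerivAt.fun_sum fun n _ => HasDerivAt.const_mul _ <|
    HasDerivAt.fun_sum fun k _ => HasDerivAt.const_mul _ ?_
  have hlin : HasDerivAt (fun y : ℝ => k * y + 1) k x := by
    simpa using ((hasDerivAt_id x).const_mul (k : ℝ)).add_const 1
  exact hlin.log (by positivity)

theorem partialSum_one_eq_one_sub_integral (N : ℕ) :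
    partialSum N 1 = 1 - ∫ x in (0 : ℝ)..1, remainderKernel N x := by
  have hftc := intervalIntegral.integral_eq_sub_of_hasDerivAt_of_le zero_le_one
    (fun x hx => (hasDerivAt_partialSum N hx.1).continuousAt.continuousWithinAt)
    (fun x hx => (hasDerivAt_partialSum N hx.1.le).congr_deriv
      (sum_Icc_one_div_mul_alternating_sum_range_choose_mul_div N hx.1))
    (intervalIntegrable_const.sub (remainderKernel_intervalIntegrable N))
  have hzero : partialSum N 0 = 0 := by simp [partialSum]
  rw [intervalIntegral.integral_sub intervalIntegrable_const
    (remainderKernel_intervalIntegrable N), hzero] at hftc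
  simpa using hftc.symm

/-- ∑_{n=1}^∞ (1/n) ∑_{k=0}^n (−1)^{k+1} C(n,k) ln(k+1) = 1. -/
theorem stmt_12 :
    Tendsto (fun N : ℕ => ∑ n ∈ Finset.Icc 1 N,
        (1 / n : ℝ) * ∑ k ∈ Finset.range (n + 1),
          (-1 : ℝ) ^ (k + 1) * (n.choose k : ℝ) * Real.log (k + 1))
      atTop (nhds 1) := by
  have hpartial (N : ℕ) : partialSum N 1 = ∑ n ∈ Finset.Icc 1 N,
      (1 / n : ℝ) * ∑ k ∈ Finset.range (n + 1),
        (-1 : ℝ) ^ (k + 1) * (n.choose k : ℝ) * Real.log (k + 1) := by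
    simp only [partialSum, mul_one]
  have hlim := tendsto_integral_remainderKernel.const_sub 1
  rw [sub_zero] at hlim
  exact hlim.congr fun N => by rw [← partialSum_one_eq_one_sub_integral, hpartial]
end

section
/- For every real t with −1 < t ≤ 1/2 and every complex s with Re(s) > 0, the double series ∑_{n=0}^∞ t^{n+1} ∑_{k=0}^n (−1)^k · binom(n,k) · (k+1)^{−s} converges and equals −∑_{k=1}^∞ (t/(t−1))^k / k^s. -/
/-!
Writing `Γ(s) (k+1)^(-s) = ∫₀^∞ x^(s-1) e^(-(k+1)x) dx` turns both series into integrals of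
geometric series: the polylogarithm series has ratio `z e^(-x)` with `z = t/(t-1)`, and, after the
binomial theorem, the double series has ratio `t (1 - e^(-x))`. Both ratios stay in `(-1, 1/2]`, so
the partial geometric sums are uniformly bounded and dominated convergence yields both limits. The
limiting integrands agree up to sign because `t / (1 - t(1 - E)) = -z / (1 - z E)`.
-/

open Filter Complex MeasureTheory Set

lemma abs_geom_sum_le {r : ℝ} (h₁ : -1 ≤ r) (h₂ : r < 1) (n : ℕ) :
    |∑ i ∈ Finset.range n, r ^ i| ≤ 2 / (1 - r) := by
  rw [geom_sum_eq h₂.ne, abs_div, abs_of_neg (sub_neg.2 h₂), neg_sub]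
  gcongr
  calc |r ^ n - 1| ≤ |r ^ n| + |1| := abs_sub _ _
    _ ≤ 1 + 1 := by
        gcongr
        · rw [abs_pow]; exact pow_le_one₀ (abs_nonneg r) (abs_le.2 ⟨h₁, h₂.le⟩)
        · simp
    _ = 2 := by norm_num

section GeometricSeries

variable {α : Type*} [MeasurableSpace α] {μ : Measure α} {F : α → ℂ} {ρ : α → ℝ} {c : ℝ}

lemma tendsto_integral_mul_geom_sum (hF : Integrable F μ) (hρ : AEStronglyMeasurable ρ μ)
    (hc : c < 1) (hρc : ∀ᵐ x ∂μ, ρ x ∈ Ioc (-1) c) :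
    Tendsto (fun N ↦ ∫ x, F x * ∑ i ∈ Finset.range N, (ρ x : ℂ) ^ i ∂μ) atTop
      (nhds (∫ x, F x * (1 - (ρ x : ℂ))⁻¹ ∂μ)) := by
  refine tendsto_integral_of_dominated_convergence (fun x ↦ ‖F x‖ * (2 / (1 - c)))
    (fun N ↦ hF.aestronglyMeasurable.mul ?_) (hF.norm.mul_const _) (fun N ↦ ?_) ?_
  · exact (by fun_prop : Continuous fun r : ℝ ↦ ∑ i ∈ Finset.range N, (r : ℂ) ^ i)
      |>.comp_aestronglyMeasurable hρ
  · filter_upwards [hρc] with x hx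
    rw [norm_mul]
    gcongr
    calc ‖∑ i ∈ Finset.range N, (ρ x : ℂ) ^ i‖ = |∑ i ∈ Finset.range N, ρ x ^ i| := by
          rw [← Real.norm_eq_abs, ← norm_real]; push_cast; rfl
      _ ≤ 2 / (1 - ρ x) := abs_geom_sum_le hx.1.le (hx.2.trans_lt hc) N
      _ ≤ 2 / (1 - c) := by have := hx.2; gcongr
  · filter_upwards [hρc] with x hx
    have : ‖(ρ x : ℂ)‖ < 1 := by
      rw [norm_real, Real.norm_eq_abs, abs_lt]; exact ⟨hx.1, hx.2.trans_lt hc⟩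
    exact (hasSum_geometric_of_norm_lt_one this).tendsto_sum_nat.const_mul _

lemma tendsto_sum_integral_mul_pow (hF : Integrable F μ) (hρ : AEStronglyMeasurable ρ μ)
    (hc : c < 1) (hρc : ∀ᵐ x ∂μ, ρ x ∈ Ioc (-1) c) :
    Tendsto (fun N ↦ ∑ k ∈ Finset.range N, ∫ x, F x * (ρ x : ℂ) ^ k ∂μ) atTop
      (nhds (∫ x, F x * (1 - (ρ x : ℂ))⁻¹ ∂μ)) := by
  refine (tendsto_integral_mul_geom_sum hF hρ hc hρc).congr fun N ↦ ?_
  have hint : ∀ k, Integrable (fun x ↦ F x * (ρ x : ℂ) ^ k) μ := fun k ↦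
    hF.mul_bdd ((continuous_ofReal.comp_aestronglyMeasurable hρ).pow k) (c := 1) <| by
      filter_upwards [hρc] with x hx
      rw [norm_pow, norm_real, Real.norm_eq_abs]
      exact pow_le_one₀ (abs_nonneg _) (abs_le.2 ⟨hx.1.le, hx.2.trans hc.le⟩)
  simp_rw [Finset.mul_sum]
  exact integral_finsetSum _ fun k _ ↦ hint k

end GeometricSeries

lemma Gamma_mul_cpow_neg_eq_integral {s : ℂ} (hs : 0 < s.re) {a : ℝ} (ha : 0 < a) :
    Gamma s * (a : ℂ) ^ (-s) = ∫ x in Ioi (0 : ℝ), (x : ℂ) ^ (s - 1) * Real.exp (-(a * x)) := by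
  have harg : (a : ℂ).arg ≠ Real.pi := by
    rw [arg_ofReal_of_nonneg ha.le]; exact Real.pi_ne_zero.symm
  push_cast
  rw [integral_cpow_mul_exp_neg_mul_Ioi hs ha, one_div, inv_cpow _ _ harg, cpow_neg, mul_comm]

lemma Gamma_mul_natCast_add_one_cpow_neg {s : ℂ} (hs : 0 < s.re) (k : ℕ) :
    Gamma s * ((k + 1 : ℕ) : ℂ) ^ (-s) =
      ∫ x in Ioi (0 : ℝ), Real.exp (-x) * (x : ℂ) ^ (s - 1) * (Real.exp (-x) : ℂ) ^ k := by
  have := Gamma_mul_cpow_neg_eq_integral hs (a := k + 1) (by positivity)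
  push_cast at this ⊢
  rw [this]
  refine setIntegral_congr_fun measurableSet_Ioi fun x _ ↦ ?_
  rw [← Complex.exp_nat_mul, mul_right_comm, ← Complex.exp_add]
  ring_nf

lemma integrableOn_Gamma_integrand_mul_exp_neg_pow {s : ℂ} (hs : 0 < s.re) (k : ℕ) :
    IntegrableOn (fun x : ℝ ↦ Real.exp (-x) * (x : ℂ) ^ (s - 1) * (Real.exp (-x) : ℂ) ^ k)
      (Ioi 0) := by
  refine (GammaIntegral_convergent hs).mul_bdd (c := 1) (by fun_prop) ?_
  filter_upwards [ae_restrict_mem measurableSet_Ioi] with x (hx : 0 < x)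
  rw [norm_pow, norm_real, Real.norm_of_nonneg (Real.exp_pos _).le]
  exact pow_le_one₀ (Real.exp_pos _).le (Real.exp_le_one_iff.2 (by linarith))

lemma Gamma_mul_pow_div_cpow_eq_integral {s : ℂ} (hs : 0 < s.re) (z : ℝ) (k : ℕ) :
    Gamma s * ((z : ℂ) ^ (k + 1) / ((k + 1 : ℕ) : ℂ) ^ s) =
      ∫ x in Ioi (0 : ℝ), z * (Real.exp (-x) * (x : ℂ) ^ (s - 1)) *
        ((z * Real.exp (-x) : ℝ) : ℂ) ^ k := by
  rw [div_eq_mul_inv, ← cpow_neg, mul_left_comm, Gamma_mul_natCast_add_one_cpow_neg hs,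
    ← integral_const_mul]
  refine setIntegral_congr_fun measurableSet_Ioi fun x _ ↦ ?_
  push_cast
  ring

lemma Gamma_mul_binomial_sum_eq_integral {s : ℂ} (hs : 0 < s.re) (t : ℝ) (n : ℕ) :
    Gamma s * ((t : ℂ) ^ (n + 1) * ∑ k ∈ Finset.range (n + 1),
        (-1 : ℂ) ^ k * (n.choose k : ℂ) * ((k + 1 : ℕ) : ℂ) ^ (-s)) =
      ∫ x in Ioi (0 : ℝ), t * (Real.exp (-x) * (x : ℂ) ^ (s - 1)) *
        ((t * (1 - Real.exp (-x)) : ℝ) : ℂ) ^ n := by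
  have hbinom : ∀ x : ℝ, ((1 - Real.exp (-x) : ℝ) : ℂ) ^ n =
      ∑ k ∈ Finset.range (n + 1), (-1 : ℂ) ^ k * (n.choose k : ℂ) * (Real.exp (-x) : ℂ) ^ k := by
    intro x
    rw [sub_eq_neg_add, ofReal_add, add_pow]
    refine Finset.sum_congr rfl fun k _ ↦ ?_
    push_cast
    ring
  calc _ = ∑ k ∈ Finset.range (n + 1), (t : ℂ) ^ (n + 1) * ((-1 : ℂ) ^ k * (n.choose k : ℂ)) *
          (Gamma s * ((k + 1 : ℕ) : ℂ) ^ (-s)) := by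
        rw [Finset.mul_sum, Finset.mul_sum]
        exact Finset.sum_congr rfl fun k _ ↦ by ring
    _ = ∑ k ∈ Finset.range (n + 1), ∫ x in Ioi (0 : ℝ),
          (t : ℂ) ^ (n + 1) * ((-1 : ℂ) ^ k * (n.choose k : ℂ)) *
            (Real.exp (-x) * (x : ℂ) ^ (s - 1) * (Real.exp (-x) : ℂ) ^ k) := by
        simp_rw [Gamma_mul_natCast_add_one_cpow_neg hs, integral_const_mul]
    _ = ∫ x in Ioi (0 : ℝ), ∑ k ∈ Finset.range (n + 1),
          (t : ℂ) ^ (n + 1) * ((-1 : ℂ) ^ k * (n.choose k : ℂ)) *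
            (Real.exp (-x) * (x : ℂ) ^ (s - 1) * (Real.exp (-x) : ℂ) ^ k) :=
        (integral_finsetSum _ fun k _ ↦
          (integrableOn_Gamma_integrand_mul_exp_neg_pow hs k).const_mul _).symm
    _ = _ := by
        refine setIntegral_congr_fun measurableSet_Ioi fun x _ ↦ ?_
        simp only [ofReal_mul, mul_pow, hbinom, Finset.mul_sum]
        exact Finset.sum_congr rfl fun k _ ↦ by ring

lemma mul_inv_one_sub_mul_one_sub_eq_neg {K : Type*} [Field K] {t e : K} (ht : t - 1 ≠ 0)
    (h : 1 - t * (1 - e) ≠ 0) :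
    t * (1 - t * (1 - e))⁻¹ = -(t / (t - 1) * (1 - t / (t - 1) * e)⁻¹) := by
  have ht' : 1 - t ≠ 0 := fun h' ↦ ht (by linear_combination -h')
  have : 1 - t / (t - 1) * e = (1 - t * (1 - e)) / (1 - t) := by
    field_simp
    ring
  rw [this]
  field_simp
  ring

lemma integral_mul_inv_one_sub_mul_one_sub {α : Type*} [MeasurableSpace α] {μ : Measure α}
    {G : α → ℂ} {e : α → ℝ} {t : ℝ} (ht : t ≠ 1) (he : ∀ᵐ x ∂μ, t * (1 - e x) ≠ 1) :
    ∫ x, t * G x * (1 - ((t * (1 - e x) : ℝ) : ℂ))⁻¹ ∂μ =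
      -∫ x, ((t / (t - 1) : ℝ) : ℂ) * G x * (1 - ((t / (t - 1) * e x : ℝ) : ℂ))⁻¹ ∂μ := by
  rw [← integral_neg]
  refine integral_congr_ae ?_
  filter_upwards [he] with x hx
  have hne : (1 : ℂ) - t * (1 - e x) ≠ 0 := by
    exact_mod_cast sub_ne_zero.2 (Ne.symm hx)
  have ht₁ : (t : ℂ) - 1 ≠ 0 := by exact_mod_cast sub_ne_zero.2 ht
  simp only [ofReal_mul, ofReal_sub, ofReal_one, ofReal_div]
  rw [mul_right_comm, mul_inv_one_sub_mul_one_sub_eq_neg ht₁ hne]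
  ring

lemma mul_mem_Ioc_of_mem_Icc {a e c : ℝ} (ha : a ∈ Icc (-1) c) (hc : 0 ≤ c) (he : e ∈ Ioo 0 1) :
    a * e ∈ Ioc (-1) c := by
  obtain ⟨ha₁, ha₂⟩ := ha
  obtain ⟨he₀, he₁⟩ := he
  constructor <;> nlinarith

lemma ae_exp_neg_mem_Ioo : ∀ᵐ x ∂(volume.restrict (Ioi (0 : ℝ))), Real.exp (-x) ∈ Ioo 0 1 := by
  filter_upwards [ae_restrict_mem measurableSet_Ioi] with x (hx : 0 < x)
  exact ⟨Real.exp_pos _, Real.exp_lt_one_iff.2 (neg_lt_zero.2 hx)⟩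

/-- For −1 < t ≤ 1/2 and Re(s) > 0, the double series
∑_{n=0}^∞ t^{n+1} ∑_{k=0}^n (−1)^k C(n,k) (k+1)^{−s} converges and equals
−∑_{k=1}^∞ (t/(t−1))^k / k^s. -/
theorem stmt_14 (t : ℝ) (ht : -1 < t) (ht' : t ≤ 1 / 2) (s : ℂ) (hs : 0 < s.re) :
    ∃ L : ℂ,
      Tendsto (fun N : ℕ => ∑ k ∈ Finset.range N,
          ((t / (t - 1) : ℝ) : ℂ) ^ (k + 1) / ((k + 1 : ℕ) : ℂ) ^ s) atTop (nhds L) ∧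
      Tendsto (fun N : ℕ => ∑ n ∈ Finset.range N,
          (t : ℂ) ^ (n + 1) * ∑ k ∈ Finset.range (n + 1),
            (-1 : ℂ) ^ k * (n.choose k : ℂ) * ((k + 1 : ℕ) : ℂ) ^ (-s))
        atTop (nhds (-L)) := by
  have hz : t / (t - 1) ∈ Icc (-1) (1 / 2) :=
    ⟨by rw [le_div_iff_of_neg (by linarith)]; linarith,
      by rw [div_le_iff_of_neg (by linarith)]; linarith⟩
  have hρ₁ := ae_exp_neg_mem_Ioo.mono fun x hx ↦ mul_mem_Ioc_of_mem_Icc hz (by norm_num) hx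
  have hρ₂ := ae_exp_neg_mem_Ioo.mono fun x hx ↦
    mul_mem_Ioc_of_mem_Icc ⟨ht.le, ht'⟩ (by norm_num) ⟨sub_pos.2 hx.2, sub_lt_self 1 hx.1⟩
  have hG := GammaIntegral_convergent hs
  have h₁ := tendsto_sum_integral_mul_pow (hG.const_mul ((t / (t - 1) : ℝ) : ℂ)) (by fun_prop)
    (by norm_num) hρ₁
  have h₂ := tendsto_sum_integral_mul_pow (hG.const_mul (t : ℂ)) (by fun_prop) (by norm_num) hρ₂
  simp_rw [← Gamma_mul_pow_div_cpow_eq_integral hs, ← Finset.mul_sum] at h₁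
  simp_rw [← Gamma_mul_binomial_sum_eq_integral hs, ← Finset.mul_sum] at h₂
  rw [integral_mul_inv_one_sub_mul_one_sub (by linarith)
    (hρ₂.mono fun x hx ↦ (hx.2.trans_lt (by norm_num)).ne)] at h₂
  have hΓ := Gamma_ne_zero_of_re_pos hs
  refine ⟨_, (h₁.const_mul (Gamma s)⁻¹).congr fun N ↦ inv_mul_cancel_left₀ hΓ _, ?_⟩
  rw [← mul_neg]
  exact (h₂.const_mul (Gamma s)⁻¹).congr fun N ↦ inv_mul_cancel_left₀ hΓ _
end

section
/- The double integral ∫_0^1 ∫_0^1 t·(1−x)/((1−t·(1−x))·ln x) dt dx converges and equals −γ; equivalently, γ = −∫_0^1 ∫_0^1 t(1−x)/((1−t(1−x))·ln x) dt dx, where γ is Euler's constant. -/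
/-!
Integrating first in `t`, `∫₀¹ t a / (1 - t a) dt = -1 - log (1 - a) / a` with `a = 1 - x` turns
the double integral into `-∫₀¹ (1 / (1 - x) + 1 / log x) dx`; since the integrand has constant sign,
Fubini–Tonelli applies. Expanding `1 / (1 - x) + 1 / log x = ∑ₙ (xⁿ - (xⁿ⁺¹ - xⁿ) / log x)` into
nonnegative terms and using `∫₀¹ (xᵇ - xᵃ) / log x dx = ∫ₐᵇ ∫₀¹ xˢ dx ds = log ((b + 1) / (a + 1))`,
the `n`-th term integrates to `1 / (n + 1) - log ((n + 2) / (n + 1))`, and the partial sums of these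
are `H_N - log (N + 1) → γ`.
-/

open MeasureTheory Real Set Filter

theorem integrable_and_integral_eq_of_hasSum_of_nonneg {α : Type*} [MeasurableSpace α]
    {μ : Measure α} {F : ℕ → α → ℝ} {f : α → ℝ} {I : ℝ} (hF : ∀ n, Integrable (F n) μ)
    (hF0 : ∀ n, 0 ≤ᵐ[μ] F n) (hf : ∀ᵐ a ∂μ, HasSum (F · a) (f a))
    (hI : HasSum (fun n => ∫ a, F n a ∂μ) I) :
    Integrable f μ ∧ ∫ a, f a ∂μ = I := by
  have hF0' : ∀ᵐ a ∂μ, ∀ n, 0 ≤ F n a := ae_all_iff.2 hF0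
  have hf0 : 0 ≤ᵐ[μ] f := by
    filter_upwards [hf, hF0'] with a ha ha0 using ha.nonneg ha0
  have hmeas : AEStronglyMeasurable f μ :=
    aestronglyMeasurable_of_tendsto_ae atTop
      (fun n => (integrable_finsetSum (Finset.range n) fun i _ => hF i).aestronglyMeasurable)
      (by filter_upwards [hf] with a ha using ha.tendsto_sum_nat)
  have hlint : ∫⁻ a, ENNReal.ofReal (f a) ∂μ = ENNReal.ofReal I := calc
    ∫⁻ a, ENNReal.ofReal (f a) ∂μ = ∫⁻ a, ∑' n, ENNReal.ofReal (F n a) ∂μ := by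
      refine lintegral_congr_ae ?_
      filter_upwards [hf, hF0'] with a ha ha0
      rw [← ha.tsum_eq, ENNReal.ofReal_tsum_of_nonneg ha0 ha.summable]
    _ = ∑' n, ENNReal.ofReal (∫ a, F n a ∂μ) := by
      rw [lintegral_tsum fun n => (hF n).aemeasurable.ennreal_ofReal]
      simp only [ofReal_integral_eq_lintegral_ofReal (hF _) (hF0 _)]
    _ = ENNReal.ofReal I := by
      rw [← ENNReal.ofReal_tsum_of_nonneg (fun n => integral_nonneg_of_ae (hF0 n)) hI.summable,
        hI.tsum_eq]
  refine ⟨⟨hmeas, (hasFiniteIntegral_iff_ofReal hf0).2 (hlint ▸ ENNReal.ofReal_lt_top)⟩, ?_⟩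
  rw [integral_eq_lintegral_of_nonneg_ae hf0 hmeas, hlint,
    ENNReal.toReal_ofReal (hI.nonneg fun n => integral_nonneg_of_ae (hF0 n))]

theorem sum_range_log_add_two_div_add_one (N : ℕ) :
    ∑ n ∈ Finset.range N, log (((n:ℝ) + 2) / (n + 1)) = log (N + 1) := by
  have hstep (n : ℕ) :
      log (((n:ℝ) + 2) / (n + 1)) = log (((n + 1 : ℕ) : ℝ) + 1) - log (n + 1) := by
    rw [log_div (by positivity) (by positivity)]
    push_cast
    ring_nf
  simp only [hstep]
  rw [Finset.sum_range_sub (fun k : ℕ => log ((k:ℝ) + 1))]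
  simp

theorem log_add_two_div_add_one_le (n : ℕ) : log (((n:ℝ) + 2) / (n + 1)) ≤ 1 / (n + 1) := by
  have h := log_le_sub_one_of_pos (x := ((n:ℝ) + 2) / (n + 1)) (by positivity)
  have : ((n:ℝ) + 2) / (n + 1) - 1 = 1 / (n + 1) := by field_simp; ring
  linarith

theorem hasSum_one_div_add_one_sub_log_eulerMascheroniConstant :
    HasSum (fun n : ℕ => 1 / ((n:ℝ) + 1) - log (((n:ℝ) + 2) / (n + 1)))
      eulerMascheroniConstant := by
  rw [hasSum_iff_tendsto_nat_of_nonneg fun n => sub_nonneg.2 (log_add_two_div_add_one_le n)]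
  convert tendsto_eulerMascheroniSeq using 2 with N
  rw [Finset.sum_sub_distrib, sum_range_log_add_two_div_add_one, eulerMascheroniSeq, harmonic]
  push_cast
  simp [one_div]

theorem integral_const_rpow {x : ℝ} (hx0 : 0 < x) (hx1 : x ≠ 1) (a b : ℝ) :
    ∫ s in a..b, x ^ s = (x ^ b - x ^ a) / log x := by
  have hlog : log x ≠ 0 := log_ne_zero_of_pos_of_ne_one hx0 hx1
  have hderiv (s : ℝ) : HasDerivAt (fun s => x ^ s / log x) (x ^ s) s := by
    simpa [mul_div_cancel_right₀ _ hlog] using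
      ((hasStrictDerivAt_const_rpow hx0 s).hasDerivAt).div_const (log x)
  rw [intervalIntegral.integral_eq_sub_of_hasDerivAt (fun s _ => hderiv s)
    ((continuous_const_rpow hx0.ne').intervalIntegrable a b), sub_div]

theorem setIntegral_rpow_Ioo_zero_one {s : ℝ} (hs : -1 < s) :
    ∫ x in Ioo (0:ℝ) 1, x ^ s = 1 / (s + 1) := by
  rw [← integral_Ioc_eq_integral_Ioo, ← intervalIntegral.integral_of_le zero_le_one,
    integral_rpow (.inl hs), zero_rpow (by linarith), one_rpow, sub_zero]

theorem integral_inv_add_one {a b : ℝ} (ha : -1 < a) (hb : -1 < b) :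
    ∫ s in a..b, (s + 1)⁻¹ = log ((b + 1) / (a + 1)) := by
  rw [intervalIntegral.integral_comp_add_right (fun s => s⁻¹),
    integral_inv_of_pos (by linarith) (by linarith)]

theorem integrable_rpow_prod_Ioo_Ioc {a b : ℝ} (ha : 0 ≤ a) :
    Integrable (fun p : ℝ × ℝ => p.1 ^ p.2)
      ((volume.restrict (Ioo 0 1)).prod (volume.restrict (Ioc a b))) := by
  refine Integrable.of_bound (measurable_fst.pow measurable_snd).aestronglyMeasurable 1 ?_
  rw [Measure.prod_restrict]
  refine ae_restrict_of_forall_mem (measurableSet_Ioo.prod measurableSet_Ioc) ?_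
  rintro ⟨x, s⟩ ⟨hx, hs⟩
  rw [norm_of_nonneg (rpow_nonneg hx.1.le s)]
  exact rpow_le_one hx.1.le hx.2.le (ha.trans hs.1.le)

theorem rpow_sub_rpow_div_log_eq_setIntegral {x : ℝ} (hx : x ∈ Ioo (0:ℝ) 1) {a b : ℝ}
    (hab : a ≤ b) : (x ^ b - x ^ a) / log x = ∫ s in Ioc a b, x ^ s := by
  rw [← intervalIntegral.integral_of_le hab, integral_const_rpow hx.1 hx.2.ne]

theorem integrableOn_rpow_sub_rpow_div_log {a b : ℝ} (ha : 0 ≤ a) (hab : a ≤ b) :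
    IntegrableOn (fun x => (x ^ b - x ^ a) / log x) (Ioo 0 1) :=
  (integrable_rpow_prod_Ioo_Ioc ha).integral_prod_left.congr <|
    ae_restrict_of_forall_mem measurableSet_Ioo fun _ hx =>
      (rpow_sub_rpow_div_log_eq_setIntegral hx hab).symm

theorem integral_rpow_sub_rpow_div_log {a b : ℝ} (ha : 0 ≤ a) (hab : a ≤ b) :
    ∫ x in Ioo 0 1, (x ^ b - x ^ a) / log x = log ((b + 1) / (a + 1)) := calc
  ∫ x in Ioo 0 1, (x ^ b - x ^ a) / log x = ∫ x in Ioo 0 1, ∫ s in Ioc a b, x ^ s :=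
    setIntegral_congr_fun measurableSet_Ioo fun _ hx =>
      rpow_sub_rpow_div_log_eq_setIntegral hx hab
  _ = ∫ s in Ioc a b, ∫ x in Ioo 0 1, x ^ s :=
    integral_integral_swap (integrable_rpow_prod_Ioo_Ioc ha)
  _ = ∫ s in Ioc a b, (s + 1)⁻¹ := by
    refine setIntegral_congr_fun measurableSet_Ioc fun s hs => ?_
    rw [setIntegral_rpow_Ioo_zero_one (by linarith [hs.1]), one_div]
  _ = log ((b + 1) / (a + 1)) := by
    rw [← intervalIntegral.integral_of_le hab, integral_inv_add_one (by linarith) (by linarith)]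

theorem pow_succ_sub_pow_div_log_eq_rpow (x : ℝ) (n : ℕ) :
    (x ^ (n + 1) - x ^ n) / log x = (x ^ ((n:ℝ) + 1) - x ^ (n:ℝ)) / log x := by
  rw [← rpow_natCast, ← rpow_natCast]
  push_cast
  rfl

theorem integrableOn_pow_succ_sub_pow_div_log (n : ℕ) :
    IntegrableOn (fun x : ℝ => (x ^ (n + 1) - x ^ n) / log x) (Ioo 0 1) := by
  simpa only [← pow_succ_sub_pow_div_log_eq_rpow] using
    integrableOn_rpow_sub_rpow_div_log (Nat.cast_nonneg n) (le_add_of_nonneg_right zero_le_one)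

theorem integral_pow_succ_sub_pow_div_log (n : ℕ) :
    ∫ x in Ioo 0 1, (x ^ (n + 1) - x ^ n) / log x = log (((n:ℝ) + 2) / (n + 1)) := by
  simp only [pow_succ_sub_pow_div_log_eq_rpow, integral_rpow_sub_rpow_div_log (Nat.cast_nonneg n)
    (le_add_of_nonneg_right zero_le_one)]
  ring_nf

theorem setIntegral_pow_Ioo_zero_one (n : ℕ) : ∫ x in Ioo (0:ℝ) 1, x ^ n = 1 / ((n:ℝ) + 1) := by
  simpa only [rpow_natCast] using
    setIntegral_rpow_Ioo_zero_one (neg_one_lt_zero.trans_le (Nat.cast_nonneg (α := ℝ) n))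

theorem sub_one_div_log_mem_Icc {x : ℝ} (hx : x ∈ Ioo (0:ℝ) 1) :
    (x - 1) / log x ∈ Icc 0 1 := by
  have hlog : log x < 0 := log_neg hx.1 hx.2
  refine ⟨div_nonneg_of_nonpos (by linarith [hx.2]) hlog.le, ?_⟩
  rw [div_le_one_of_neg hlog]
  linarith [log_le_sub_one_of_pos hx.1]

theorem pow_succ_sub_pow_div_log (x : ℝ) (n : ℕ) :
    (x ^ (n + 1) - x ^ n) / log x = x ^ n * ((x - 1) / log x) := by
  ring

theorem pow_sub_pow_succ_sub_pow_div_log_nonneg {x : ℝ} (hx : x ∈ Ioo (0:ℝ) 1) (n : ℕ) :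
    0 ≤ x ^ n - (x ^ (n + 1) - x ^ n) / log x := by
  rw [pow_succ_sub_pow_div_log, sub_nonneg]
  exact mul_le_of_le_one_right (pow_nonneg hx.1.le n) (sub_one_div_log_mem_Icc hx).2

theorem hasSum_pow_sub_pow_succ_sub_pow_div_log {x : ℝ} (hx : x ∈ Ioo (0:ℝ) 1) :
    HasSum (fun n : ℕ => x ^ n - (x ^ (n + 1) - x ^ n) / log x) (1 / (1 - x) + 1 / log x) := by
  have hlog : log x ≠ 0 := (log_neg hx.1 hx.2).ne
  have hx1 : 1 - x ≠ 0 := by linarith [hx.2]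
  have hgeom := hasSum_geometric_of_lt_one hx.1.le hx.2
  have hsum : 1 / (1 - x) + 1 / log x = (1 - x)⁻¹ - (1 - x)⁻¹ * ((x - 1) / log x) := by
    field_simp
    ring
  simpa only [hsum, pow_succ_sub_pow_div_log] using hgeom.sub (hgeom.mul_right ((x - 1) / log x))

theorem integrableOn_and_integral_one_div_one_sub_add_one_div_log :
    IntegrableOn (fun x : ℝ => 1 / (1 - x) + 1 / log x) (Ioo 0 1) ∧
    ∫ x in Ioo 0 1, (1 / (1 - x) + 1 / log x) = eulerMascheroniConstant := by
  have hpow (n : ℕ) : IntegrableOn (fun x : ℝ => x ^ n) (Ioo 0 1) :=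
    (continuous_pow n).integrableOn_Icc.mono_set Ioo_subset_Icc_self
  refine integrable_and_integral_eq_of_hasSum_of_nonneg
    (F := fun n x => x ^ n - (x ^ (n + 1) - x ^ n) / log x)
    (fun n => (hpow n).sub (integrableOn_pow_succ_sub_pow_div_log n))
    (fun n => ae_restrict_of_forall_mem measurableSet_Ioo fun _ hx =>
      pow_sub_pow_succ_sub_pow_div_log_nonneg hx n)
    (ae_restrict_of_forall_mem measurableSet_Ioo fun _ hx =>
      hasSum_pow_sub_pow_succ_sub_pow_div_log hx) ?_
  simpa only [integral_sub (hpow _) (integrableOn_pow_succ_sub_pow_div_log _),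
    setIntegral_pow_Ioo_zero_one, integral_pow_succ_sub_pow_div_log] using
    hasSum_one_div_add_one_sub_log_eulerMascheroniConstant

theorem one_sub_mul_pos {t a : ℝ} (ht : t ∈ Icc (0:ℝ) 1) (ha : a < 1) : 0 < 1 - t * a := by
  rcases le_or_gt a 0 with h | h
  · nlinarith [ht.1]
  · nlinarith [ht.2]

theorem integral_mul_div_one_sub_mul {a : ℝ} (ha0 : a ≠ 0) (ha1 : a < 1) :
    ∫ t in (0:ℝ)..1, t * a / (1 - t * a) = -1 - log (1 - a) / a := by
  have hderiv : ∀ t ∈ uIcc (0:ℝ) 1,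
      HasDerivAt (fun t => -t - log (1 - t * a) / a) (t * a / (1 - t * a)) t := by
    intro t ht
    rw [uIcc_of_le zero_le_one] at ht
    have hpos := one_sub_mul_pos ht ha1
    have hlog : HasDerivAt (fun t => log (1 - t * a)) (-a / (1 - t * a)) t := by
      simpa using (((hasDerivAt_id t).mul_const a).const_sub 1).log hpos.ne'
    refine ((hasDerivAt_id' t).neg.sub (hlog.div_const a)).congr_deriv ?_
    have : 1 - a * t ≠ 0 := by rw [mul_comm]; exact hpos.ne'
    field_simp
    ring
  have hcont : ContinuousOn (fun t => t * a / (1 - t * a)) (uIcc 0 1) := by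
    rw [uIcc_of_le zero_le_one]
    exact (continuousOn_id.mul continuousOn_const).div (by fun_prop)
      fun t ht => (one_sub_mul_pos ht ha1).ne'
  rw [intervalIntegral.integral_eq_sub_of_hasDerivAt hderiv hcont.intervalIntegrable]
  simp

theorem mul_one_sub_div_mul_log_nonpos {t x : ℝ} (ht : t ∈ Icc (0:ℝ) 1) (hx : x ∈ Ioo (0:ℝ) 1) :
    t * (1 - x) / ((1 - t * (1 - x)) * log x) ≤ 0 :=
  div_nonpos_of_nonneg_of_nonpos (mul_nonneg ht.1 (by linarith [hx.2]))
    (mul_nonpos_of_nonneg_of_nonpos (one_sub_mul_pos ht (by linarith [hx.1])).le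
      (log_neg hx.1 hx.2).le)

theorem integrableOn_mul_one_sub_div_mul_log {x : ℝ} (hx : x ∈ Ioo (0:ℝ) 1) :
    IntegrableOn (fun t => t * (1 - x) / ((1 - t * (1 - x)) * log x)) (Ioo 0 1) :=
  ContinuousOn.integrableOn_Icc ((continuousOn_id.mul continuousOn_const).div (by fun_prop)
      fun t ht => mul_ne_zero (one_sub_mul_pos ht (by linarith [hx.1])).ne'
        (log_neg hx.1 hx.2).ne) |>.mono_set Ioo_subset_Icc_self

theorem integral_mul_one_sub_div_mul_log {x : ℝ} (hx : x ∈ Ioo (0:ℝ) 1) :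
    ∫ t in Ioo 0 1, t * (1 - x) / ((1 - t * (1 - x)) * log x) = -(1 / (1 - x) + 1 / log x) := by
  have hlog : log x ≠ 0 := (log_neg hx.1 hx.2).ne
  have hx1 : 1 - x ≠ 0 := by linarith [hx.2]
  simp only [← div_div]
  rw [← integral_Ioc_eq_integral_Ioo, ← intervalIntegral.integral_of_le zero_le_one,
    intervalIntegral.integral_div, integral_mul_div_one_sub_mul hx1 (by linarith [hx.1]),
    sub_sub_cancel]
  field_simp
  ring

/-- ∫_0^1 ∫_0^1 t(1−x)/((1−t(1−x))·ln x) dt dx converges and equals −γ. -/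
theorem stmt_15 :
    IntegrableOn
        (fun p : ℝ × ℝ => p.1 * (1 - p.2) / ((1 - p.1 * (1 - p.2)) * Real.log p.2))
        (Set.Ioo 0 1 ×ˢ Set.Ioo 0 1) ∧
      ∫ p in (Set.Ioo (0:ℝ) 1 ×ˢ Set.Ioo (0:ℝ) 1),
          p.1 * (1 - p.2) / ((1 - p.1 * (1 - p.2)) * Real.log p.2) =
        -Real.eulerMascheroniConstant := by
  have hprod : volume.restrict (Ioo (0:ℝ) 1 ×ˢ Ioo (0:ℝ) 1) =
      (volume.restrict (Ioo 0 1)).prod (volume.restrict (Ioo 0 1)) := by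
    rw [Measure.volume_eq_prod, Measure.prod_restrict]
  obtain ⟨hg_int, hg⟩ := integrableOn_and_integral_one_div_one_sub_add_one_div_log
  have hnorm (x : ℝ) (hx : x ∈ Ioo (0:ℝ) 1) :
      ∫ t in Ioo 0 1, ‖t * (1 - x) / ((1 - t * (1 - x)) * log x)‖ =
        1 / (1 - x) + 1 / log x := by
    rw [setIntegral_congr_fun measurableSet_Ioo fun t ht =>
        norm_of_nonpos (mul_one_sub_div_mul_log_nonpos (Ioo_subset_Icc_self ht) hx),
      integral_neg, integral_mul_one_sub_div_mul_log hx, neg_neg]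
  have hint : IntegrableOn
      (fun p : ℝ × ℝ => p.1 * (1 - p.2) / ((1 - p.1 * (1 - p.2)) * log p.2))
      (Ioo 0 1 ×ˢ Ioo 0 1) := by
    rw [IntegrableOn, hprod, integrable_prod_iff' (Measurable.aestronglyMeasurable (by fun_prop))]
    exact ⟨ae_restrict_of_forall_mem measurableSet_Ioo fun _ hx =>
        integrableOn_mul_one_sub_div_mul_log hx,
      hg_int.congr (ae_restrict_of_forall_mem measurableSet_Ioo fun x hx => (hnorm x hx).symm)⟩
  refine ⟨hint, ?_⟩
  rw [hprod, integral_prod_symm _ (hprod ▸ hint), setIntegral_congr_fun measurableSet_Ioo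
    fun _ hx => integral_mul_one_sub_div_mul_log hx, integral_neg, hg]
end
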